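/- arXiv:0906.3106 — 15 statements merged into one kernel-verified Lean document; each statement's English description precedes it below -/
import Mathlib

section
/- Let p_X, p_Y, α_X, β_X, α_Y, β_Y be real numbers and set q_X = 1 − p_X, q_Y = 1 − p_Y. Define α_Z = (p_X α_X + q_X β_X)(p_Y α_Y + q_Y β_Y) + (p_X α_X + q_X β_X)(1 − α_Y − β_Y) + (1 − α_X − β_X)(p_Y α_Y + q_Y β_Y) and β_Z = (q_X α_X + p_X β_X)(q_Y α_Y + p_Y β_Y) + (q_X α_X + p_X β_X)(1 − α_Y − β_Y) + (1 − α_X − β_X)(q_Y α_Y + p_Y β_Y). Writing C_W = 1 − α_W − β_W and D_W = α_W − β_W for W ∈ {X, Y, Z}, the identity C_Z = (1/2)[1 − C_X − C_Y + 3 C_X C_Y − (2p_X − 1)(2p_Y − 1) D_X D_Y] holds. -/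
/-- Fitch/Maddison recursion identity for C_Z. -/
theorem fitch_recurrence_C
    (pX pY aX bX aY bY qX qY aZ bZ : ℝ)
    (hqX : qX = 1 - pX) (hqY : qY = 1 - pY)
    (haZ : aZ = (pX * aX + qX * bX) * (pY * aY + qY * bY)
        + (pX * aX + qX * bX) * (1 - aY - bY)
        + (1 - aX - bX) * (pY * aY + qY * bY))
    (hbZ : bZ = (qX * aX + pX * bX) * (qY * aY + pY * bY)
        + (qX * aX + pX * bX) * (1 - aY - bY)
        + (1 - aX - bX) * (qY * aY + pY * bY)) :
    1 - aZ - bZ = (1 / 2) * (1 - (1 - aX - bX) - (1 - aY - bY)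
        + 3 * (1 - aX - bX) * (1 - aY - bY)
        - (2 * pX - 1) * (2 * pY - 1) * (aX - bX) * (aY - bY)) := by
  subst hqX hqY haZ hbZ
  ring
end

section
/- For every real p with 1/2 ≤ p ≤ 1 and every n ≥ 0, one has 0 ≤ C_n(p) ≤ 1/2 and 0 ≤ D_n(p) ≤ 1. -/
/-!
Put `q = 2p - 1 ∈ [0, 1]`. The bounds follow from the stronger invariant
`0 ≤ C ≤ 1/2`, `0 ≤ D`, `C + D ≤ 1`. The recursion only sees `D` through `t = q D`, and the
invariant gives `0 ≤ t ≤ 1 - C`. On that interval each bound is a quadratic inequality in `t`;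
the one for `C + D` is tight at `t = 1 - C`, where
`2 - (2 C' + 2 D') = (1 - C - t) (1 + 3 C - t)` vanishes.
-/

section FitchStep

variable {c t : ℝ}

lemma fitch_next_C_nonneg (ht0 : 0 ≤ t) (ht : t ≤ 1 - c) :
    0 ≤ 1 - 2 * c + 3 * c ^ 2 - t ^ 2 := by
  have hsq : t ^ 2 ≤ (1 - c) ^ 2 := pow_le_pow_left₀ ht0 ht 2
  nlinarith [sq_nonneg c]

lemma fitch_next_C_le_one (hc0 : 0 ≤ c) (hc1 : c ≤ 1 / 2) :
    1 - 2 * c + 3 * c ^ 2 - t ^ 2 ≤ 1 := by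
  nlinarith [sq_nonneg t, mul_nonneg hc0 (by linarith : 0 ≤ 2 - 3 * c)]

lemma fitch_next_sum_le_two (hc0 : 0 ≤ c) (ht : t ≤ 1 - c) :
    1 - 2 * c + 3 * c ^ 2 - t ^ 2 + 2 * ((1 + c) * t) ≤ 2 := by
  have hgap : 2 - (1 - 2 * c + 3 * c ^ 2 - t ^ 2 + 2 * ((1 + c) * t))
      = (1 - c - t) * (1 + 3 * c - t) := by ring
  linarith [mul_nonneg (sub_nonneg.mpr ht) (by linarith : 0 ≤ 1 + 3 * c - t)]

end FitchStep

lemma fitch_invariant_step {q c d c' d' : ℝ} (hq0 : 0 ≤ q) (hq1 : q ≤ 1)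
    (hc' : 2 * c' = 1 - 2 * c + 3 * c ^ 2 - q ^ 2 * d ^ 2) (hd' : d' = q * (1 + c) * d)
    (h : 0 ≤ c ∧ c ≤ 1 / 2 ∧ 0 ≤ d ∧ c + d ≤ 1) :
    0 ≤ c' ∧ c' ≤ 1 / 2 ∧ 0 ≤ d' ∧ c' + d' ≤ 1 := by
  obtain ⟨hc0, hc1, hd0, hcd⟩ := h
  have ht0 : 0 ≤ q * d := mul_nonneg hq0 hd0
  have ht : q * d ≤ 1 - c := (mul_le_of_le_one_left hd0 hq1).trans (by linarith)
  rw [← mul_pow] at hc'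
  have hd'' : d' = (1 + c) * (q * d) := by rw [hd']; ring
  refine ⟨?_, ?_, ?_, ?_⟩
  · linarith [fitch_next_C_nonneg ht0 ht]
  · linarith [fitch_next_C_le_one (t := q * d) hc0 hc1]
  · rw [hd'']; positivity
  · linarith [fitch_next_sum_le_two hc0 ht]

/-- For 1/2 ≤ p ≤ 1, the Fitch quantities satisfy 0 ≤ C_n ≤ 1/2 and 0 ≤ D_n ≤ 1. -/
theorem fitch_CD_bounds
    (p : ℝ) (C D : ℕ → ℝ)
    (hC0 : C 0 = 0) (hD0 : D 0 = 1)
    (hC : ∀ n, 2 * C (n + 1) =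
        1 - 2 * C n + 3 * (C n) ^ 2 - (2 * p - 1) ^ 2 * (D n) ^ 2)
    (hD : ∀ n, D (n + 1) = (2 * p - 1) * (1 + C n) * D n)
    (hp1 : 1 / 2 ≤ p) (hp2 : p ≤ 1) :
    ∀ n : ℕ, (0 ≤ C n ∧ C n ≤ 1 / 2) ∧ (0 ≤ D n ∧ D n ≤ 1) := by
  have hq0 : 0 ≤ 2 * p - 1 := by linarith
  have hq1 : 2 * p - 1 ≤ 1 := by linarith
  have invariant : ∀ n, 0 ≤ C n ∧ C n ≤ 1 / 2 ∧ 0 ≤ D n ∧ C n + D n ≤ 1 := by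
    intro n
    induction n with
    | zero => rw [hC0, hD0]; norm_num
    | succ n ih => exact fitch_invariant_step hq0 hq1 (hC n) (hD n) ih
  intro n
  obtain ⟨hc0, hc1, hd0, hcd⟩ := invariant n
  exact ⟨⟨hc0, hc1⟩, hd0, by linarith⟩
end

section
/- Let p be real with 1/2 ≤ p ≤ 1 and let n ≥ 2. If C_{n−1}(p) ≤ 1/3, then C_n(p) ≤ 1/3. -/
/-!
Put `q = 2p - 1` and `y_m = q D_m`. The recursion for `C` can be written as
`6 C_{m+1} = (1 - 3 C_m)² + 2 - 3 y_m²`, so `C_{m+1} ≤ 1/3` iff `(1 - 3 C_m)² ≤ 3 y_m²`.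
If `C_{m+1} ≤ 1/3`, the same identity gives `0 ≤ 1 - 3 C_{m+1} ≤ 3 y_m² / 2`, hence
`(1 - 3 C_{m+1})² ≤ 9 y_m⁴ / 4 ≤ 3 q² (1 + C_m)² y_m² = 3 y_{m+1}²`, because `y_m ≤ q` and
`C_m ≥ 0`. These last facts come from the invariant `0 ≤ C_m`, `0 ≤ D_m ≤ 1 - C_m`.
-/

structure IsFitchRecursion (q : ℝ) (C D : ℕ → ℝ) : Prop where
  C_succ : ∀ n, 2 * C (n + 1) = 1 - 2 * C n + 3 * C n ^ 2 - q ^ 2 * D n ^ 2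
  D_succ : ∀ n, D (n + 1) = q * (1 + C n) * D n

namespace IsFitchRecursion

variable {q : ℝ} {C D : ℕ → ℝ}

theorem six_mul_C_succ (h : IsFitchRecursion q C D) (n : ℕ) :
    6 * C (n + 1) = (1 - 3 * C n) ^ 2 + 2 - 3 * (q * D n) ^ 2 := by
  linear_combination 3 * h.C_succ n

theorem C_succ_le_third_iff (h : IsFitchRecursion q C D) (n : ℕ) :
    C (n + 1) ≤ 1 / 3 ↔ (1 - 3 * C n) ^ 2 ≤ 3 * (q * D n) ^ 2 := by
  constructor <;> intro hle <;> linarith [h.six_mul_C_succ n]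

theorem C_nonneg_and_D_mem_Icc (h : IsFitchRecursion q C D) (hq₀ : 0 ≤ q) (hq₁ : q ≤ 1)
    (hC₀ : C 0 = 0) (hD₀ : D 0 = 1) (n : ℕ) : 0 ≤ C n ∧ D n ∈ Set.Icc 0 (1 - C n) := by
  induction n with
  | zero => simp [hC₀, hD₀]
  | succ n ih =>
    obtain ⟨hc, hd₀, hd₁⟩ := ih
    have hy₀ : 0 ≤ q * D n := mul_nonneg hq₀ hd₀
    have hy₁ : q * D n ≤ 1 - C n := (mul_le_of_le_one_left hd₀ hq₁).trans hd₁
    have hy_sq : (q * D n) ^ 2 ≤ (1 - C n) ^ 2 := pow_le_pow_left₀ hy₀ hy₁ 2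
    have hC_succ := h.C_succ n
    refine ⟨by nlinarith, ?_, ?_⟩
    · rw [h.D_succ]
      positivity
    · -- `1 - C_{n+1} - D_{n+1}` is half the product `(1 - C_n - y)(1 + 3 C_n - y)` of two
      -- nonpositive factors, where `y = q D_n`.
      have hprod : 0 ≤ (1 - C n - q * D n) * (1 + 3 * C n - q * D n) :=
        mul_nonneg (by linarith) (by linarith)
      rw [h.D_succ]
      nlinarith

theorem C_succ_succ_le_third (h : IsFitchRecursion q C D) (hq₀ : 0 ≤ q)
    {n : ℕ} (hc : 0 ≤ C n) (hd : D n ∈ Set.Icc 0 1) (hle : C (n + 1) ≤ 1 / 3) :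
    C (n + 2) ≤ 1 / 3 := by
  rw [h.C_succ_le_third_iff]
  set y := q * D n
  have hy_le : y ≤ q := mul_le_of_le_one_right hq₀ hd.2
  have hy_sq : y ^ 2 ≤ (q * (1 + C n)) ^ 2 :=
    pow_le_pow_left₀ (mul_nonneg hq₀ hd.1) (hy_le.trans (by nlinarith)) 2
  have hlow : 0 ≤ 1 - 3 * C (n + 1) := by linarith
  have hupp : 1 - 3 * C (n + 1) ≤ 3 * y ^ 2 / 2 := by
    nlinarith [h.six_mul_C_succ n, sq_nonneg (1 - 3 * C n)]
  calc (1 - 3 * C (n + 1)) ^ 2 ≤ (3 * y ^ 2 / 2) ^ 2 := pow_le_pow_left₀ hlow hupp 2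
    _ ≤ 3 * y ^ 2 * (q * (1 + C n)) ^ 2 := by nlinarith [sq_nonneg y]
    _ = 3 * (q * D (n + 1)) ^ 2 := by rw [h.D_succ]; ring

end IsFitchRecursion

/-- For 1/2 ≤ p ≤ 1 and n ≥ 2, if C_{n-1} ≤ 1/3 then C_n ≤ 1/3. -/
theorem fitch_C_small_stays_small
    (p : ℝ) (C D : ℕ → ℝ)
    (hC0 : C 0 = 0) (hD0 : D 0 = 1)
    (hC : ∀ n, 2 * C (n + 1) =
        1 - 2 * C n + 3 * (C n) ^ 2 - (2 * p - 1) ^ 2 * (D n) ^ 2)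
    (hD : ∀ n, D (n + 1) = (2 * p - 1) * (1 + C n) * D n)
    (hp1 : 1 / 2 ≤ p) (hp2 : p ≤ 1)
    (n : ℕ) (hn : 2 ≤ n) (h : C (n - 1) ≤ 1 / 3) :
    C n ≤ 1 / 3 := by
  have hrec : IsFitchRecursion (2 * p - 1) C D := ⟨hC, hD⟩
  have hq₀ : 0 ≤ 2 * p - 1 := by linarith
  have hq₁ : 2 * p - 1 ≤ 1 := by linarith
  obtain ⟨m, rfl⟩ : ∃ m, n = m + 2 := ⟨n - 2, by omega⟩
  obtain ⟨hc, hd₀, hd₁⟩ := hrec.C_nonneg_and_D_mem_Icc hq₀ hq₁ hC0 hD0 m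
  exact hrec.C_succ_succ_le_third hq₀ hc ⟨hd₀, by linarith⟩ h
end

section
/- Let p be real with 1/2 ≤ p ≤ 1 and let n ≥ 1. If C_{n−1}(p) ≥ 1/3, then C_n(p) ≤ C_{n−1}(p). -/
/-!
Write `q = 2p - 1` and `e = q · D`. Along the recursion the signal term stays dominated by the
ambiguity, `|e| ≤ 1 - C`: the next value of `1 - C` exceeds `(1 + C)|e|` by
`(1 - C - |e|)(1 + 3C - |e|) / 2 ≥ 0`. Since `2 (C_n - C_{n-1}) = (1 - C)(1 - 3C) - e²` with
`C = C_{n-1}` and `C ≤ 1`, the claim follows once `C ≥ 1/3`.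
-/

section FitchStep

variable {c c' e : ℝ}

lemma fitch_step_nonneg (he : |e| ≤ 1 - c)
    (hc' : 2 * c' = 1 - 2 * c + 3 * c ^ 2 - e ^ 2) : 0 ≤ c' := by
  have : e ^ 2 ≤ (1 - c) ^ 2 := sq_le_sq' (abs_le.1 he).1 (abs_le.1 he).2
  nlinarith

lemma fitch_step_abs_le {q : ℝ} (hq : |q| ≤ 1) (hc : 0 ≤ c) (he : |e| ≤ 1 - c)
    (hc' : 2 * c' = 1 - 2 * c + 3 * c ^ 2 - e ^ 2) : |q * (1 + c) * e| ≤ 1 - c' := by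
  have hfactor : 0 ≤ (1 - c - |e|) * (1 + 3 * c - |e|) :=
    mul_nonneg (by linarith) (by linarith)
  calc |q * (1 + c) * e| = |q| * ((1 + c) * |e|) := by
        rw [abs_mul, abs_mul, abs_of_nonneg (by linarith : 0 ≤ 1 + c), mul_assoc]
    _ ≤ 1 * ((1 + c) * |e|) := by gcongr
    _ ≤ 1 - c' := by nlinarith [sq_abs e]

lemma fitch_step_le_of_third_le (he : |e| ≤ 1 - c) (h : 1 / 3 ≤ c)
    (hc' : 2 * c' = 1 - 2 * c + 3 * c ^ 2 - e ^ 2) : c' ≤ c := by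
  have hc1 : c ≤ 1 := by linarith [abs_nonneg e]
  nlinarith [sq_nonneg e, mul_nonneg (sub_nonneg.2 hc1) (by linarith : 0 ≤ 3 * c - 1)]

end FitchStep

lemma fitch_signal_le_ambiguity {q : ℝ} (hq : |q| ≤ 1) {C D : ℕ → ℝ}
    (hC0 : C 0 = 0) (hD0 : D 0 = 1)
    (hC : ∀ n, 2 * C (n + 1) = 1 - 2 * C n + 3 * (C n) ^ 2 - q ^ 2 * (D n) ^ 2)
    (hD : ∀ n, D (n + 1) = q * (1 + C n) * D n) :
    ∀ n, 0 ≤ C n ∧ |q * D n| ≤ 1 - C n := by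
  intro n
  induction n with
  | zero => simpa [hC0, hD0] using hq
  | succ n ih =>
    obtain ⟨hc, he⟩ := ih
    have hc' : 2 * C (n + 1) = 1 - 2 * C n + 3 * C n ^ 2 - (q * D n) ^ 2 := by
      rw [hC n, mul_pow]
    refine ⟨fitch_step_nonneg he hc', ?_⟩
    rw [hD n, show q * (q * (1 + C n) * D n) = q * (1 + C n) * (q * D n) by ring]
    exact fitch_step_abs_le hq hc he hc'

theorem fitch_C_large_decreases_general
    (p : ℝ) (C D : ℕ → ℝ)
    (hC0 : C 0 = 0) (hD0 : D 0 = 1)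
    (hC : ∀ n, 2 * C (n + 1) =
        1 - 2 * C n + 3 * (C n) ^ 2 - (2 * p - 1) ^ 2 * (D n) ^ 2)
    (hD : ∀ n, D (n + 1) = (2 * p - 1) * (1 + C n) * D n)
    (hp1 : 1 / 2 ≤ p) (hp2 : p ≤ 1)
    (n : ℕ) (h : 1 / 3 ≤ C (n - 1)) :
    C n ≤ C (n - 1) := by
  rcases n with _ | n
  · exact le_rfl
  rw [Nat.add_sub_cancel] at h ⊢
  have hq : |2 * p - 1| ≤ 1 := abs_le.2 ⟨by linarith, by linarith⟩
  obtain ⟨-, he⟩ := fitch_signal_le_ambiguity hq hC0 hD0 hC hD n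
  exact fitch_step_le_of_third_le he h (by rw [hC n, mul_pow])

/-- For 1/2 ≤ p ≤ 1 and n ≥ 1, if C_{n-1} ≥ 1/3 then C_n ≤ C_{n-1}. -/
theorem fitch_C_large_decreases
    (p : ℝ) (C D : ℕ → ℝ)
    (hC0 : C 0 = 0) (hD0 : D 0 = 1)
    (hC : ∀ n, 2 * C (n + 1) =
        1 - 2 * C n + 3 * (C n) ^ 2 - (2 * p - 1) ^ 2 * (D n) ^ 2)
    (hD : ∀ n, D (n + 1) = (2 * p - 1) * (1 + C n) * D n)
    (hp1 : 1 / 2 ≤ p) (hp2 : p ≤ 1)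
    (n : ℕ) (hn : 1 ≤ n) (h : 1 / 3 ≤ C (n - 1)) :
    C n ≤ C (n - 1) :=
  fitch_C_large_decreases_general p C D hC0 hD0 hC hD hp1 hp2 n h
end

section
/- Let p be real with 1/8 ≤ p < 7/8. Then the sequence C_n(p) converges to 1/3 as n → ∞. -/
/-!
In the coordinates `u = 1 - 3 C`, `t = 3 (2p-1)² D²` the recursion reads
`u' = (t - u²)/2`, `t' = (2p-1)² (4 - u)² t / 9`, with fixed point `(0, 0)`. For `(2p-1)² ≤ 9/16`
the region `|u| ≤ 1/2`, `0 ≤ t ≤ 1`, `u < 0 → t ≤ 1/3` is invariant and contains the point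
reached after one step, and on it the Lyapunov function `ψ = t (1 - u) + u²` satisfies
`ψ' ≤ ψ - ψ²/20`. Hence `ψ → 0`, and since `u² ≤ ψ`, `u → 0`, i.e. `C → 1/3`.
-/

open Filter Topology

theorem tendsto_zero_of_succ_le_sub_mul_sq {a : ℕ → ℝ} {c : ℝ} (hc : 0 < c)
    (h0 : ∀ n, 0 ≤ a n) (hstep : ∀ n, a (n + 1) ≤ a n - c * a n ^ 2) :
    Tendsto a atTop (𝓝 0) := by
  have hanti : Antitone a :=
    antitone_nat_of_succ_le fun n => by nlinarith [hstep n, sq_nonneg (a n)]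
  have hlim := tendsto_atTop_ciInf hanti ⟨0, by rintro _ ⟨n, rfl⟩; exact h0 n⟩
  set L := ⨅ n, a n
  have hL0 : 0 ≤ L := ge_of_tendsto' hlim h0
  have hLstep : L ≤ L - c * L ^ 2 :=
    le_of_tendsto_of_tendsto' (hlim.comp (tendsto_add_atTop_nat 1))
      (hlim.sub ((hlim.pow 2).const_mul c)) hstep
  have hL : L = 0 := by
    by_contra hne
    linarith [mul_pos hc (pow_pos (hL0.lt_of_ne' hne) 2)]
  rwa [hL] at hlim

namespace Fitch

structure InRegion (u t : ℝ) : Prop where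
  neg_half_le : -(1 / 2) ≤ u
  le_half : u ≤ 1 / 2
  t_nonneg : 0 ≤ t
  t_le_one : t ≤ 1
  t_le_third : u < 0 → t ≤ 1 / 3

def lyapunov (u t : ℝ) : ℝ := t * (1 - u) + u ^ 2

theorem InRegion.sq_le_lyapunov {u t : ℝ} (h : InRegion u t) : u ^ 2 ≤ lyapunov u t := by
  unfold lyapunov
  nlinarith [mul_nonneg h.t_nonneg (by linarith [h.le_half] : (0 : ℝ) ≤ 1 - u)]

theorem lyapunov_mono {u t t' : ℝ} (hu : u ≤ 1) (ht : t ≤ t') :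
    lyapunov u t ≤ lyapunov u t' := by
  unfold lyapunov
  nlinarith

theorem step_t_le {s u t : ℝ} (hs : s ≤ 9 / 16) (ht : 0 ≤ t) :
    s * (4 - u) ^ 2 * t / 9 ≤ (4 - u) ^ 2 * t / 16 := by
  nlinarith [mul_nonneg (sq_nonneg (4 - u)) ht]

-- The clause `u < 0 → t ≤ 1/3` absorbs the growth factor `(4 - u)² / 16 > 1` of `t` when `u < 0`.
theorem InRegion.step {s u t : ℝ} (hs0 : 0 ≤ s) (hs : s ≤ 9 / 16) (h : InRegion u t) :
    InRegion ((t - u ^ 2) / 2) (s * (4 - u) ^ 2 * t / 9) := by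
  obtain ⟨hu1, hu2, ht0, ht1, ht3⟩ := h
  have hle := step_t_le (u := u) hs ht0
  have hgrowth : (4 - u) ^ 2 ≤ 81 / 4 := by nlinarith
  refine ⟨by nlinarith, by nlinarith, by positivity, ?_, fun hneg => ?_⟩
  · rcases le_or_gt 0 u with hu | hu
    · nlinarith [mul_le_mul_of_nonneg_right (by nlinarith : (4 - u) ^ 2 ≤ 16) ht0]
    · nlinarith [mul_le_mul hgrowth (ht3 hu) ht0 (by norm_num)]
  · have htu : t ≤ 1 / 4 := by nlinarith
    nlinarith [mul_le_mul hgrowth htu ht0 (by norm_num)]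

theorem inRegion_first_step {s : ℝ} (hs0 : 0 ≤ s) (hs : s ≤ 9 / 16) :
    InRegion ((3 * s - 1) / 2) (3 * s ^ 2) :=
  ⟨by linarith, by linarith, by positivity, by nlinarith, fun hneg => by nlinarith⟩

theorem lyapunov_extremal_step_le {u t : ℝ} (hu1 : -(1 / 2) ≤ u) (hu2 : u ≤ 1 / 2)
    (ht0 : 0 ≤ t) (ht1 : t ≤ 1) :
    lyapunov ((t - u ^ 2) / 2) ((4 - u) ^ 2 * t / 16) ≤ lyapunov u t - lyapunov u t ^ 2 / 20 := by
  unfold lyapunov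
  have h1 : (0 : ℝ) ≤ 1 / 2 - u := by linarith
  have h2 : (0 : ℝ) ≤ 1 / 2 + u := by linarith
  have h3 : (0 : ℝ) ≤ 1 - t := by linarith
  nlinarith [mul_nonneg (mul_nonneg ht0 ht0) h1, mul_nonneg (mul_nonneg ht0 h3) (sq_nonneg u),
    mul_nonneg (mul_nonneg (sq_nonneg u) h1) h2,
    mul_nonneg (mul_nonneg (mul_nonneg ht0 (sq_nonneg u)) h1) h2,
    mul_nonneg (mul_nonneg ht0 (sq_nonneg u)) h1, mul_nonneg (mul_nonneg ht0 (sq_nonneg u)) h2,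
    mul_nonneg (sq_nonneg t) (sq_nonneg u), sq_nonneg (u - t / 2), sq_nonneg (u - t / 3),
    sq_nonneg (u - t / 4), sq_nonneg (2 * u - t)]

theorem InRegion.lyapunov_step_le {s u t : ℝ} (hs : s ≤ 9 / 16) (h : InRegion u t) :
    lyapunov ((t - u ^ 2) / 2) (s * (4 - u) ^ 2 * t / 9) ≤
      lyapunov u t - lyapunov u t ^ 2 / 20 := by
  have ht := step_t_le (u := u) hs h.t_nonneg
  have hu : (t - u ^ 2) / 2 ≤ 1 := by nlinarith [h.t_le_one]
  exact (lyapunov_mono hu ht).trans <|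
    lyapunov_extremal_step_le h.neg_half_le h.le_half h.t_nonneg h.t_le_one

theorem tendsto_zero_of_orbit {s : ℝ} (hs0 : 0 ≤ s) (hs : s ≤ 9 / 16) {u t : ℕ → ℝ}
    (hu : ∀ n, u (n + 1) = (t n - u n ^ 2) / 2)
    (ht : ∀ n, t (n + 1) = s * (4 - u n) ^ 2 * t n / 9) (h0 : InRegion (u 0) (t 0)) :
    Tendsto u atTop (𝓝 0) := by
  have hR : ∀ n, InRegion (u n) (t n) := by
    intro n
    induction n with
    | zero => exact h0
    | succ n ih => rw [hu, ht]; exact ih.step hs0 hs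
  have hψ : Tendsto (fun n => lyapunov (u n) (t n)) atTop (𝓝 0) :=
    tendsto_zero_of_succ_le_sub_mul_sq (c := 1 / 20) (by norm_num)
      (fun n => (sq_nonneg _).trans (hR n).sq_le_lyapunov)
      (fun n => by rw [hu, ht]; linarith [(hR n).lyapunov_step_le hs])
  have hsqrt : Tendsto (fun n => √(lyapunov (u n) (t n))) atTop (𝓝 0) := by
    simpa using hψ.sqrt
  exact squeeze_zero_norm (fun n => Real.abs_le_sqrt (hR n).sq_le_lyapunov) hsqrt

end Fitch

/-- For 1/8 ≤ p < 7/8, C_n converges to 1/3. -/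
theorem fitch_C_tendsto_third
    (p : ℝ) (C D : ℕ → ℝ)
    (hC0 : C 0 = 0) (hD0 : D 0 = 1)
    (hC : ∀ n, 2 * C (n + 1) =
        1 - 2 * C n + 3 * (C n) ^ 2 - (2 * p - 1) ^ 2 * (D n) ^ 2)
    (hD : ∀ n, D (n + 1) = (2 * p - 1) * (1 + C n) * D n)
    (hp1 : 1 / 8 ≤ p) (hp2 : p < 7 / 8) :
    Tendsto C atTop (nhds (1 / 3)) := by
  set s := (2 * p - 1) ^ 2 with hs_def
  have hs0 : 0 ≤ s := sq_nonneg _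
  have hs : s ≤ 9 / 16 := by nlinarith
  -- the orbit is started at `n = 1`, the first point of the invariant region
  set u : ℕ → ℝ := fun n => 1 - 3 * C (n + 1) with hu_def
  set t : ℕ → ℝ := fun n => 3 * s * D (n + 1) ^ 2 with ht_def
  have hu : ∀ n, u (n + 1) = (t n - u n ^ 2) / 2 := fun n => by
    simp only [hu_def, ht_def]
    linear_combination (-3 / 2 : ℝ) * hC (n + 1)
  have ht : ∀ n, t (n + 1) = s * (4 - u n) ^ 2 * t n / 9 := fun n => by
    simp only [hu_def, ht_def, hD (n + 1), hs_def]
    ring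
  have h0 : Fitch.InRegion (u 0) (t 0) := by
    have hC1 : C 1 = (1 - s) / 2 := by linarith [hC0 ▸ hD0 ▸ hC 0]
    convert Fitch.inRegion_first_step hs0 hs using 1
    · simp only [hu_def, hC1]; ring
    · simp only [ht_def, hD 0, hC0, hD0, hs_def]; ring
  have hlim := ((Fitch.tendsto_zero_of_orbit hs0 hs hu ht h0).const_sub 1).div_const 3
  rw [← tendsto_add_atTop_iff_nat 1]
  convert hlim using 2 with n
  · simp only [hu_def]; ring
  · norm_num
end

section
/- Let p be real with 1/8 ≤ p < 7/8. Then the sequence D_n(p) converges to 0 as n → ∞. -/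
/-!
Put `θ = 2p - 1`, so that `θ² ≤ 9/16` and `D_{n+1} = θ (1 + C_n) D_n`.

If `θ² < 4/9`, the box `0 ≤ C ≤ 1/2`, `D² ≤ 1` is invariant, so `|D|` shrinks at least by the
factor `3|θ|/2 < 1` at each step.

If `4/9 ≤ θ² ≤ 9/16`, write `u = C - 1/3` and `v = θ² D²`; the recurrence for `C` becomes
`u' = (3u² - v)/2`. The region `3u² ≤ 9v/10`, `u ≤ -v/20`, `D² ≤ 1` is invariant, so `C` stays
below `1/3` by a margin proportional to `D²`. Hence `|θ| (1 + C) ≤ 1 - D²/60`, i.e.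
`|D_{n+1}| ≤ |D_n| - |D_n|³/60`, and a nonnegative sequence decreasing this way tends to `0`.
-/

open Filter Topology

theorem tendsto_zero_of_le_sub_mul_pow {s : ℕ → ℝ} {c : ℝ} {k : ℕ} (hs : ∀ n, 0 ≤ s n)
    (hc : 0 < c) (hk : k ≠ 0) (h : ∀ n, s (n + 1) ≤ s n - c * s n ^ k) :
    Tendsto s atTop (𝓝 0) := by
  have hanti : Antitone s := antitone_nat_of_succ_le fun n =>
    (h n).trans (sub_le_self _ (mul_nonneg hc.le (pow_nonneg (hs n) k)))
  have hL := tendsto_atTop_ciInf hanti ⟨0, Set.forall_mem_range.2 hs⟩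
  set L := ⨅ n, s n
  have hfix : L ≤ L - c * L ^ k :=
    le_of_tendsto_of_tendsto' (hL.comp (tendsto_add_atTop_nat 1))
      (hL.sub ((hL.pow k).const_mul c)) h
  have hLk : L ^ k = 0 :=
    le_antisymm (nonpos_of_mul_nonpos_right (by linarith) hc)
      (pow_nonneg (ge_of_tendsto' hL hs) k)
  exact (pow_eq_zero_iff hk).1 hLk ▸ hL

structure IsFitchSeq (θ : ℝ) (C D : ℕ → ℝ) : Prop where
  C_zero : C 0 = 0
  D_zero : D 0 = 1
  C_succ : ∀ n, 2 * C (n + 1) = 1 - 2 * C n + 3 * C n ^ 2 - θ ^ 2 * D n ^ 2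
  D_succ : ∀ n, D (n + 1) = θ * (1 + C n) * D n

namespace IsFitchSeq

variable {θ : ℝ} {C D : ℕ → ℝ}

theorem bounds_of_sq_le_four_ninths (h : IsFitchSeq θ C D) (hθ : θ ^ 2 ≤ 4 / 9) (n : ℕ) :
    0 ≤ C n ∧ C n ≤ 1 / 2 ∧ D n ^ 2 ≤ 1 := by
  induction n with
  | zero => norm_num [h.C_zero, h.D_zero]
  | succ n ih =>
    obtain ⟨hC₀, hC₁, hD⟩ := ih
    have hC := h.C_succ n
    have hv : θ ^ 2 * D n ^ 2 ≤ 4 / 9 := by nlinarith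
    have hfac : θ ^ 2 * (1 + C n) ^ 2 ≤ 1 := by nlinarith
    refine ⟨by nlinarith, by nlinarith, ?_⟩
    calc D (n + 1) ^ 2 = θ ^ 2 * (1 + C n) ^ 2 * D n ^ 2 := by rw [h.D_succ]; ring
      _ ≤ 1 * 1 := mul_le_mul hfac hD (sq_nonneg _) zero_le_one
      _ = 1 := one_mul 1

theorem abs_D_succ_le_of_sq_le_four_ninths (h : IsFitchSeq θ C D) (hθ : θ ^ 2 ≤ 4 / 9)
    (n : ℕ) : |D (n + 1)| ≤ 3 / 2 * |θ| * |D n| := by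
  obtain ⟨hC₀, hC₁, -⟩ := h.bounds_of_sq_le_four_ninths hθ n
  have hfac : |θ| * (1 + C n) ≤ 3 / 2 * |θ| := by nlinarith [abs_nonneg θ]
  rw [h.D_succ, abs_mul, abs_mul, abs_of_nonneg (by linarith : 0 ≤ 1 + C n)]
  exact mul_le_mul_of_nonneg_right hfac (abs_nonneg _)

theorem tendsto_D_of_sq_lt_four_ninths (h : IsFitchSeq θ C D) (hθ : θ ^ 2 < 4 / 9) :
    Tendsto D atTop (𝓝 0) := by
  have hr : 3 / 2 * |θ| < 1 := by nlinarith [sq_abs θ, abs_nonneg θ]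
  rw [tendsto_zero_iff_abs_tendsto_zero]
  refine squeeze_zero (fun n => abs_nonneg _)
    (fun n => le_geom (by positivity) n fun k _ => h.abs_D_succ_le_of_sq_le_four_ninths hθ.le k) ?_
  simpa [h.D_zero] using tendsto_pow_atTop_nhds_zero_of_lt_one (by positivity) hr

theorem bounds_of_four_ninths_le_sq (h : IsFitchSeq θ C D) (hθ₁ : 4 / 9 ≤ θ ^ 2)
    (hθ₂ : θ ^ 2 ≤ 9 / 16) (n : ℕ) :
    3 * (C n - 1 / 3) ^ 2 ≤ 9 / 10 * (θ ^ 2 * D n ^ 2) ∧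
      C n - 1 / 3 ≤ -(θ ^ 2 * D n ^ 2) / 20 ∧ D n ^ 2 ≤ 1 := by
  induction n with
  | zero => norm_num [h.C_zero, h.D_zero]; constructor <;> linarith
  | succ n ih =>
    obtain ⟨hu, hneg, hD⟩ := ih
    set u := C n - 1 / 3 with hu_def
    set v := θ ^ 2 * D n ^ 2 with hv_def
    have hu' : C (n + 1) - 1 / 3 = (3 * u ^ 2 - v) / 2 := by linear_combination h.C_succ n / 2
    have hv' : θ ^ 2 * D (n + 1) ^ 2 = θ ^ 2 * (1 + C n) ^ 2 * v := by rw [h.D_succ]; ring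
    have hv_le : v ≤ 9 / 16 := by nlinarith
    -- `u² ≤ 27/160 < (21/50)²`, which keeps `(1 + C)² = (4/3 + u)²` above `5/6`
    have hu_ge : -21 / 50 ≤ u := by nlinarith
    have hfac_le : θ ^ 2 * (1 + C n) ^ 2 ≤ 1 := by nlinarith
    have hv_nonneg : 0 ≤ v := by positivity
    have hfac_ge : 3 / 4 * θ ^ 2 ≤ 9 / 10 * (θ ^ 2 * (1 + C n) ^ 2) := by
      have : 5 / 6 ≤ (1 + C n) ^ 2 := by nlinarith
      nlinarith [mul_le_mul_of_nonneg_left this (sq_nonneg θ)]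
    have hv'_le : θ ^ 2 * D (n + 1) ^ 2 ≤ v := by
      rw [hv']; exact mul_le_of_le_one_left hv_nonneg hfac_le
    refine ⟨?_, ?_, ?_⟩
    · have hw : (v - 3 * u ^ 2) ^ 2 ≤ v ^ 2 :=
        pow_le_pow_left₀ (by nlinarith) (by nlinarith) 2
      have hvv : v ^ 2 ≤ θ ^ 2 * v := by
        rw [sq]; exact mul_le_mul_of_nonneg_right (by nlinarith) hv_nonneg
      rw [hu', hv']
      nlinarith [mul_le_mul_of_nonneg_right hfac_ge hv_nonneg]
    · rw [hu']
      nlinarith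
    · calc D (n + 1) ^ 2 = θ ^ 2 * (1 + C n) ^ 2 * D n ^ 2 := by rw [h.D_succ]; ring
        _ ≤ 1 * 1 := mul_le_mul hfac_le hD (sq_nonneg _) zero_le_one
        _ = 1 := one_mul 1

theorem abs_D_succ_le_of_four_ninths_le_sq (h : IsFitchSeq θ C D) (hθ₁ : 4 / 9 ≤ θ ^ 2)
    (hθ₂ : θ ^ 2 ≤ 9 / 16) (n : ℕ) : |D (n + 1)| ≤ |D n| - 1 / 60 * |D n| ^ 3 := by
  obtain ⟨hu, hneg, hD⟩ := h.bounds_of_four_ninths_le_sq hθ₁ hθ₂ n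
  have h1C : 0 ≤ 1 + C n := by nlinarith
  have hθ : |θ| ≤ 3 / 4 := by nlinarith [sq_abs θ, abs_nonneg θ]
  have hfac : |θ| * (1 + C n) ≤ 1 - D n ^ 2 / 60 := by nlinarith
  calc |D (n + 1)| = |θ| * (1 + C n) * |D n| := by
        rw [h.D_succ, abs_mul, abs_mul, abs_of_nonneg h1C]
    _ ≤ (1 - D n ^ 2 / 60) * |D n| := by gcongr
    _ = |D n| - 1 / 60 * |D n| ^ 3 := by rw [← sq_abs (D n)]; ring

theorem tendsto_D_of_four_ninths_le_sq (h : IsFitchSeq θ C D) (hθ₁ : 4 / 9 ≤ θ ^ 2)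
    (hθ₂ : θ ^ 2 ≤ 9 / 16) : Tendsto D atTop (𝓝 0) :=
  (tendsto_zero_iff_abs_tendsto_zero D).2 <|
    tendsto_zero_of_le_sub_mul_pow (fun n => abs_nonneg _) (by norm_num) three_ne_zero
      (h.abs_D_succ_le_of_four_ninths_le_sq hθ₁ hθ₂)

theorem tendsto_D (h : IsFitchSeq θ C D) (hθ : θ ^ 2 ≤ 9 / 16) : Tendsto D atTop (𝓝 0) := by
  rcases lt_or_ge (θ ^ 2) (4 / 9) with hsmall | hlarge
  · exact h.tendsto_D_of_sq_lt_four_ninths hsmall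
  · exact h.tendsto_D_of_four_ninths_le_sq hlarge hθ

end IsFitchSeq

/-- For 1/8 ≤ p < 7/8, D_n converges to 0. -/
theorem fitch_D_tendsto_zero
    (p : ℝ) (C D : ℕ → ℝ)
    (hC0 : C 0 = 0) (hD0 : D 0 = 1)
    (hC : ∀ n, 2 * C (n + 1) =
        1 - 2 * C n + 3 * (C n) ^ 2 - (2 * p - 1) ^ 2 * (D n) ^ 2)
    (hD : ∀ n, D (n + 1) = (2 * p - 1) * (1 + C n) * D n)
    (hp1 : 1 / 8 ≤ p) (hp2 : p < 7 / 8) :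
    Tendsto D atTop (nhds 0) :=
  IsFitchSeq.tendsto_D ⟨hC0, hD0, hC, hD⟩ (by nlinarith)
end

section
/- Let p be real with 7/8 ≤ p ≤ 1 and define c_k = 2(1−p)/(2p−1) − C_k(p). Then for every k ≥ 2, c_k ≥ 0. -/
/-!
Put q = 2p − 1 and m = 2(1 − p)/(2p − 1), so that q(1 + m) = 1 and 0 ≤ m ≤ 1/3. The region
0 ≤ C_n ≤ m, 0 ≤ q D_n ≤ 1 − C_n, C_{n+1} ≤ m is invariant under the recursion. The bound
q D_n ≤ 1 − C_n gives C_n² ≤ C_{n+1}, and eliminating D_{n+1} writes 2 C_{n+2} as a convex quadratic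
in t = C_{n+1} (for fixed C_n). As t ranges over [C_n², m], the bound C_{n+2} ≤ m only has to be
checked at the two endpoints, where it becomes a polynomial inequality in C_n and m.
-/

theorem quadratic_le_of_endpoints {α β γ a b t M : ℝ} (hα : 0 ≤ α) (hat : a ≤ t) (htb : t ≤ b)
    (ha : α * a ^ 2 + β * a + γ ≤ M) (hb : α * b ^ 2 + β * b + γ ≤ M) :
    α * t ^ 2 + β * t + γ ≤ M := by
  rcases hat.eq_or_lt with rfl | hat'
  · exact ha
  have key : (b - a) * (α * t ^ 2 + β * t + γ - M) =
      (b - t) * (α * a ^ 2 + β * a + γ - M) + (t - a) * (α * b ^ 2 + β * b + γ - M)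
        - α * (t - a) * (b - t) * (b - a) := by ring
  have : (b - a) * (α * t ^ 2 + β * t + γ - M) ≤ 0 := by
    rw [key]
    nlinarith [mul_nonneg (sub_nonneg.2 htb) (sub_nonneg.2 ha),
      mul_nonneg (sub_nonneg.2 hat) (sub_nonneg.2 hb),
      mul_nonneg (mul_nonneg (mul_nonneg hα (sub_nonneg.2 hat)) (sub_nonneg.2 htb))
        (sub_nonneg.2 (hat.trans htb))]
  nlinarith

namespace Fitch

variable {q m x y t : ℝ}

theorem two_mul_sq_le_succ (hy0 : 0 ≤ y) (hy : y ≤ 1 - x) :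
    2 * x ^ 2 ≤ 1 - 2 * x + 3 * x ^ 2 - y ^ 2 := by
  nlinarith

theorem succ_D_le (hq : q ≤ 1) (hx : 0 ≤ x) (hy0 : 0 ≤ y) (hy : y ≤ 1 - x) :
    2 * (q * (1 + x) * y) ≤ 2 - (1 - 2 * x + 3 * x ^ 2 - y ^ 2) := by
  have hqy : q * ((1 + x) * y) ≤ (1 + x) * y := mul_le_of_le_one_left (by positivity) hq
  nlinarith [mul_nonneg (sub_nonneg.2 hy) (by linarith : 0 ≤ 1 + 3 * x - y)]

theorem endpoint_sq_le (hx : 0 ≤ x) (hxm : x ≤ m) (hm : m ≤ 1 / 3) :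
    (1 + m) ^ 2 * (1 - 2 * x ^ 2 + 3 * x ^ 4 - 2 * m) ≤ (1 - x ^ 2) ^ 2 := by
  have hu : x ^ 2 ≤ m ^ 2 := pow_le_pow_left₀ hx hxm 2
  have hm0 : 0 ≤ m := hx.trans hxm
  nlinarith [mul_le_mul hu hu (sq_nonneg x) (sq_nonneg m), mul_nonneg (sq_nonneg x) hm0,
    sq_nonneg x, sq_nonneg m, mul_nonneg (mul_nonneg hm0 hm0) hm0]

theorem endpoint_m_le (hx : 0 ≤ x) (hxm : x ≤ m) (hm : m ≤ 1 / 3) :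
    (1 - m) * (1 - 3 * m) * (1 + m) ^ 2 ≤ (1 + x) ^ 2 * (1 - 2 * x + 3 * x ^ 2 - 2 * m) := by
  -- the difference of the two sides is (m - x) times the right-hand side of hQ
  have hQ : 4 * m * (1 - 3 * m) * (1 + m) ≤
      4 * m - 2 * m ^ 2 - 3 * m ^ 3 - (3 * m ^ 2 + 2 * m) * x - (3 * m + 4) * x ^ 2
        - 3 * x ^ 3 := by
    nlinarith [mul_le_mul hxm hxm hx (hx.trans hxm), sq_nonneg x, sq_nonneg m]
  have hQ0 : 0 ≤ 4 * m * (1 - 3 * m) * (1 + m) := by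
    have hm0 : 0 ≤ m := hx.trans hxm
    have hm3 : 0 ≤ 1 - 3 * m := by linarith
    positivity
  nlinarith [mul_nonneg (sub_nonneg.2 hxm) (hQ0.trans hQ)]

theorem succ_succ_le (hq : q * (1 + m) = 1) (hx : 0 ≤ x) (hxm : x ≤ m) (hm : m ≤ 1 / 3)
    (ht : x ^ 2 ≤ t) (htm : t ≤ m) :
    1 - 2 * t + 3 * t ^ 2 - q ^ 2 * (1 + x) ^ 2 * (1 - 2 * x + 3 * x ^ 2 - 2 * t) ≤ 2 * m := by
  have hq2 : q ^ 2 * (1 + m) ^ 2 = 1 := by rw [← mul_pow, hq, one_pow]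
  set K := q ^ 2 * (1 + x) ^ 2
  calc _ = 3 * t ^ 2 + (2 * K - 2) * t + (1 - K * (1 - 2 * x + 3 * x ^ 2)) := by ring
    _ ≤ 2 * m := by
      refine quadratic_le_of_endpoints (by norm_num) ht htm ?_ ?_
      · linear_combination mul_le_mul_of_nonneg_left (endpoint_sq_le hx hxm hm) (sq_nonneg q)
          - (1 - 2 * x ^ 2 + 3 * x ^ 4 - 2 * m) * hq2
      · linear_combination mul_le_mul_of_nonneg_left (endpoint_m_le hx hxm hm) (sq_nonneg q)
          - (1 - m) * (1 - 3 * m) * hq2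

theorem invariant_region (C D : ℕ → ℝ) (hq : q * (1 + m) = 1) (hm0 : 0 ≤ m) (hm : m ≤ 1 / 3)
    (hC0 : C 0 = 0) (hD0 : D 0 = 1)
    (hC : ∀ n, 2 * C (n + 1) = 1 - 2 * C n + 3 * C n ^ 2 - q ^ 2 * D n ^ 2)
    (hD : ∀ n, D (n + 1) = q * (1 + C n) * D n) (n : ℕ) :
    0 ≤ C n ∧ 0 ≤ D n ∧ q * D n ≤ 1 - C n ∧ C n ≤ m ∧ C (n + 1) ≤ m := by
  have hq0 : 0 ≤ q := by nlinarith
  have hq1 : q ≤ 1 := by nlinarith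
  induction n with
  | zero =>
    have h1 := hC 0
    rw [hC0, hD0] at h1 ⊢
    refine ⟨le_rfl, zero_le_one, by linarith, hm0, by nlinarith⟩
  | succ n ih =>
    obtain ⟨hx, hd, hdx, hxm, htm⟩ := ih
    have hy : 0 ≤ q * D n := mul_nonneg hq0 hd
    have ht : C n ^ 2 ≤ C (n + 1) := by
      linarith [two_mul_sq_le_succ hy hdx, hC n]
    refine ⟨(sq_nonneg _).trans ht, by rw [hD]; positivity, ?_, htm, ?_⟩
    · have hD' : q * D (n + 1) = q * (1 + C n) * (q * D n) := by rw [hD]; ring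
      linarith [succ_D_le hq1 hx hy hdx, hC n]
    · have h2 : 2 * C (n + 2) = 1 - 2 * C (n + 1) + 3 * C (n + 1) ^ 2
          - q ^ 2 * (1 + C n) ^ 2 * (1 - 2 * C n + 3 * C n ^ 2 - 2 * C (n + 1)) := by
        rw [hC (n + 1), hD n]
        linear_combination -(q ^ 2 * (1 + C n) ^ 2) * hC n
      linarith [succ_succ_le hq hx hxm hm ht htm]

end Fitch

theorem fitch_c_nonneg_general
    (p : ℝ) (C D : ℕ → ℝ)
    (hC0 : C 0 = 0) (hD0 : D 0 = 1)
    (hC : ∀ n, 2 * C (n + 1) =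
        1 - 2 * C n + 3 * (C n) ^ 2 - (2 * p - 1) ^ 2 * (D n) ^ 2)
    (hD : ∀ n, D (n + 1) = (2 * p - 1) * (1 + C n) * D n)
    (hp1 : 7 / 8 ≤ p) (hp2 : p ≤ 1)
    (k : ℕ) :
    0 ≤ 2 * (1 - p) / (2 * p - 1) - C k := by
  have hq0 : 0 < 2 * p - 1 := by linarith
  have hq : (2 * p - 1) * (1 + 2 * (1 - p) / (2 * p - 1)) = 1 := by
    field_simp
    ring
  have hm0 : 0 ≤ 2 * (1 - p) / (2 * p - 1) := div_nonneg (by linarith) hq0.le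
  have hm : 2 * (1 - p) / (2 * p - 1) ≤ 1 / 3 := by
    rw [div_le_iff₀ hq0]
    linarith
  exact sub_nonneg.2 (Fitch.invariant_region C D hq hm0 hm hC0 hD0 hC hD k).2.2.2.1

/-- For 7/8 ≤ p ≤ 1, c_k = 2(1-p)/(2p-1) - C_k is nonnegative for k ≥ 2. -/
theorem fitch_c_nonneg
    (p : ℝ) (C D : ℕ → ℝ)
    (hC0 : C 0 = 0) (hD0 : D 0 = 1)
    (hC : ∀ n, 2 * C (n + 1) =
        1 - 2 * C n + 3 * (C n) ^ 2 - (2 * p - 1) ^ 2 * (D n) ^ 2)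
    (hD : ∀ n, D (n + 1) = (2 * p - 1) * (1 + C n) * D n)
    (hp1 : 7 / 8 ≤ p) (hp2 : p ≤ 1)
    (k : ℕ) (hk : 2 ≤ k) :
    0 ≤ 2 * (1 - p) / (2 * p - 1) - C k :=
  fitch_c_nonneg_general p C D hC0 hD0 hC hD hp1 hp2 k
end

section
/- Let p be real with 7/8 ≤ p ≤ 1 and define d_k = D_k(p)². Then for every k ≥ 2, d_{k+1} ≤ d_k. -/
/-!
Write `q = 2p - 1`, so that `D (n + 1) = q (1 + C n) D n`. Then `D (n + 1) ^ 2 ≤ D n ^ 2` as soon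
as `C n` lies in `[0, (1 - q) / q]`, i.e. `0 ≤ q (1 + C n) ≤ 1`, and one shows by induction that this
holds for every `n`, together with `D n ^ 2 ≤ 1` and the same bound for `C (n + 1)`.

Propagating the upper bound on `C` is the heart of the matter. Taking `y = C (n + 1)` as the
parameter, `D n ^ 2` is affine in `y`, so the required bound on `C (n + 2)` says that a concave
quadratic in `y` is nonnegative on `[0, (1 - q) / q]`. It suffices to check the two endpoints, and at
the right one `q ≥ 3/4` is exactly what is needed.
-/

lemma nonneg_of_concave_quadratic {a b c r y : ℝ} (hc : 0 ≤ c) (hy₀ : 0 ≤ y) (hyr : y ≤ r)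
    (h₀ : 0 ≤ a) (hr : 0 ≤ a + b * r - c * r ^ 2) : 0 ≤ a + b * y - c * y ^ 2 := by
  rcases hyr.lt_or_eq with hlt | rfl
  · have hr₀ : 0 < r := hy₀.trans_lt hlt
    refine nonneg_of_mul_nonneg_right ?_ hr₀
    have interpolation : r * (a + b * y - c * y ^ 2)
        = (r - y) * a + y * (a + b * r - c * r ^ 2) + c * r * y * (r - y) := by ring
    rw [interpolation]
    have := mul_nonneg (sub_nonneg.2 hyr) h₀
    have := mul_nonneg hy₀ hr
    have := mul_nonneg (mul_nonneg (mul_nonneg hc hr₀.le) hy₀) (sub_nonneg.2 hyr)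
    linarith
  · exact hr

namespace Fitch

def quad (x : ℝ) : ℝ := 1 - 2 * x + 3 * x ^ 2

noncomputable def stepC (q c d : ℝ) : ℝ := (quad c - q ^ 2 * d ^ 2) / 2

def stepD (q c d : ℝ) : ℝ := q * (1 + c) * d

def IsContracting (q c : ℝ) : Prop := 0 ≤ c ∧ q * (1 + c) ≤ 1

def Admissible (q c d : ℝ) : Prop :=
  IsContracting q c ∧ IsContracting q (stepC q c d) ∧ d ^ 2 ≤ 1

lemma one_add_sq_mul_quad (y : ℝ) : (1 + y) ^ 2 * quad y = 1 + 4 * y ^ 3 + 3 * y ^ 4 := by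
  unfold quad; ring

variable {q : ℝ}

lemma IsContracting.sq_le_one (hq : 0 ≤ q) {c : ℝ} (hc : IsContracting q c) :
    (q * (1 + c)) ^ 2 ≤ 1 :=
  pow_le_one₀ (mul_nonneg hq (by linarith [hc.1])) hc.2

lemma sq_le_quad (hq : 0 ≤ q) {y : ℝ} (hy : IsContracting q y) : q ^ 2 ≤ quad y := by
  have hF : 1 ≤ (1 + y) ^ 2 * quad y := by
    rw [one_add_sq_mul_quad]
    nlinarith [pow_nonneg hy.1 3, pow_nonneg hy.1 4]
  have hquad : 0 ≤ quad y := by unfold quad; nlinarith [sq_nonneg (3 * y - 1)]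
  calc q ^ 2 = q ^ 2 * 1 := (mul_one _).symm
    _ ≤ q ^ 2 * ((1 + y) ^ 2 * quad y) := by gcongr
    _ = (q * (1 + y)) ^ 2 * quad y := by ring
    _ ≤ 1 * quad y := by gcongr; exact hy.sq_le_one hq
    _ = quad y := one_mul _

lemma sq_stepD_le (hq : 0 ≤ q) {c : ℝ} (d : ℝ) (hc : IsContracting q c) :
    stepD q c d ^ 2 ≤ d ^ 2 :=
  calc stepD q c d ^ 2 = (q * (1 + c)) ^ 2 * d ^ 2 := by unfold stepD; ring
    _ ≤ 1 * d ^ 2 := by gcongr; exact hc.sq_le_one hq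
    _ = d ^ 2 := one_mul _

-- With `z = q c` and `w = q y`, where `y = stepC q c d`, this is `q` times the slack in the bound
-- `q (1 + stepC q y (stepD q c d)) ≤ 1` (see `IsContracting.stepC_stepC`).
def gap (q z w : ℝ) : ℝ :=
  2 * q * (1 - q) - q ^ 2 + (q + z) ^ 2 * (q ^ 2 - 2 * q * z + 3 * z ^ 2)
    + (2 * q - 2 * q * (q + z) ^ 2) * w - 3 * w ^ 2

lemma gap_zero_nonneg (hq : 0 ≤ q) {z : ℝ} (hz : 0 ≤ z) : 0 ≤ gap q z 0 := by
  have : gap q z 0 = q * (q - 1) ^ 2 * (q + 2) + 4 * q * z ^ 3 + 3 * z ^ 4 := by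
    rw [gap]; ring
  rw [this]
  positivity

lemma gap_one_sub_nonneg (hq : 3 / 4 ≤ q) {z : ℝ} (hz : 0 ≤ z) (hzq : z ≤ 1 - q) :
    0 ≤ gap q z (1 - q) := by
  set u := 1 - q with hu
  set cofactor := 4 * q ^ 2 * u - 2 * q * u ^ 2 - 3 * u ^ 3 - (2 * q * u + 3 * u ^ 2) * z
    - (4 * q + 3 * u) * z ^ 2 - 3 * z ^ 3
  have factor : gap q z u = (u - z) * cofactor := by
    simp only [gap, cofactor, hu]; ring
  -- `cofactor` decreases in `z` down to `4 u (4 q - 3)` at `z = u`: this is where `q ≥ 3/4` enters.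
  have decreasing : cofactor = 4 * u * (4 * q - 3) + (u - z) * (2 * q * u + 3 * u ^ 2
      + (4 * q + 3 * u) * (u + z) + 3 * (u ^ 2 + u * z + z ^ 2)) := by
    simp only [cofactor, hu]; ring
  have hu₀ : 0 ≤ u := hz.trans hzq
  have hzu : 0 ≤ u - z := sub_nonneg.2 hzq
  have : 0 ≤ 4 * q - 3 := by linarith
  have : 0 ≤ q := by linarith
  rw [factor, decreasing]
  positivity

lemma gap_nonneg (hq : 3 / 4 ≤ q) {z w : ℝ} (hz : 0 ≤ z) (hzq : z ≤ 1 - q) (hw : 0 ≤ w)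
    (hwq : w ≤ 1 - q) : 0 ≤ gap q z w :=
  nonneg_of_concave_quadratic (by norm_num) hw hwq
    (by simpa [gap] using gap_zero_nonneg (by linarith) hz) (gap_one_sub_nonneg hq hz hzq)

lemma IsContracting.stepC_stepC (hq : 3 / 4 ≤ q) {c d : ℝ} (hc : IsContracting q c)
    (hy : IsContracting q (stepC q c d)) :
    q * (1 + stepC q (stepC q c d) (stepD q c d)) ≤ 1 := by
  set y := stepC q c d with hy_def
  have hq₀ : 0 < q := by linarith
  have hgap := gap_nonneg hq (mul_nonneg hq₀.le hc.1) (by linarith [hc.2])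
    (mul_nonneg hq₀.le hy.1) (by linarith [hy.2] : q * y ≤ 1 - q)
  have hqd : q ^ 2 * d ^ 2 = quad c - 2 * y := by rw [hy_def, stepC]; ring
  have hstep : stepC q y (stepD q c d) = (quad y - q ^ 2 * (1 + c) ^ 2 * (quad c - 2 * y)) / 2 := by
    rw [stepC, stepD, ← hqd]; ring
  have hslack : 1 - q * (1 + stepC q y (stepD q c d)) = gap q (q * c) (q * y) / (2 * q) := by
    rw [hstep, gap, quad, quad]
    field_simp
    ring
  have : 0 ≤ gap q (q * c) (q * y) / (2 * q) := by positivity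
  linarith

lemma Admissible.step (hq : 3 / 4 ≤ q) {c d : ℝ} (h : Admissible q c d) :
    Admissible q (stepC q c d) (stepD q c d) := by
  obtain ⟨hc, hy, hd⟩ := h
  have hq₀ : 0 ≤ q := by linarith
  have hd' : stepD q c d ^ 2 ≤ 1 := (sq_stepD_le hq₀ d hc).trans hd
  refine ⟨hy, ⟨?_, hc.stepC_stepC hq hy⟩, hd'⟩
  have := sq_le_quad hq₀ hy
  rw [stepC]
  nlinarith [mul_le_mul_of_nonneg_left hd' (sq_nonneg q)]

lemma admissible_zero_one (hq₀ : 0 ≤ q) (hq₁ : q ≤ 1) : Admissible q 0 1 := by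
  refine ⟨⟨le_rfl, by linarith⟩, ⟨?_, ?_⟩, le_of_eq (one_pow 2)⟩ <;>
    simp only [stepC, quad] <;> nlinarith [mul_nonneg (sq_nonneg (q - 1)) (by linarith : 0 ≤ q + 2)]

end Fitch

theorem fitch_d_decreasing_general
    (p : ℝ) (C D : ℕ → ℝ)
    (hC0 : C 0 = 0) (hD0 : D 0 = 1)
    (hC : ∀ n, 2 * C (n + 1) =
        1 - 2 * C n + 3 * (C n) ^ 2 - (2 * p - 1) ^ 2 * (D n) ^ 2)
    (hD : ∀ n, D (n + 1) = (2 * p - 1) * (1 + C n) * D n)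
    (hp1 : 7 / 8 ≤ p) (hp2 : p ≤ 1)
    (k : ℕ) :
    (D (k + 1)) ^ 2 ≤ (D k) ^ 2 := by
  have hq : 3 / 4 ≤ 2 * p - 1 := by linarith
  have hC' : ∀ n, C (n + 1) = Fitch.stepC (2 * p - 1) (C n) (D n) := fun n => by
    rw [Fitch.stepC, Fitch.quad]; linarith [hC n]
  have admissible : ∀ n, Fitch.Admissible (2 * p - 1) (C n) (D n) := by
    intro n
    induction n with
    | zero => rw [hC0, hD0]; exact Fitch.admissible_zero_one (by linarith) (by linarith)
    | succ n ih => rw [hC', hD]; exact ih.step hq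
  rw [hD]
  exact Fitch.sq_stepD_le (by linarith) (D k) (admissible k).1

/-- For 7/8 ≤ p ≤ 1, d_k = D_k² is decreasing for k ≥ 2. -/
theorem fitch_d_decreasing
    (p : ℝ) (C D : ℕ → ℝ)
    (hC0 : C 0 = 0) (hD0 : D 0 = 1)
    (hC : ∀ n, 2 * C (n + 1) =
        1 - 2 * C n + 3 * (C n) ^ 2 - (2 * p - 1) ^ 2 * (D n) ^ 2)
    (hD : ∀ n, D (n + 1) = (2 * p - 1) * (1 + C n) * D n)
    (hp1 : 7 / 8 ≤ p) (hp2 : p ≤ 1)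
    (k : ℕ) (hk : 2 ≤ k) :
    (D (k + 1)) ^ 2 ≤ (D k) ^ 2 :=
  fitch_d_decreasing_general p C D hC0 hD0 hC hD hp1 hp2 k
end

section
/- Let p be real with 7/8 ≤ p ≤ 1 and define c_k = 2(1−p)/(2p−1) − C_k(p). Then for every k ≥ 2, c_k ≤ 5(1−p)/(4(2p−1)). -/
/-!
Put s = 2p - 1, q = 1 - p and a_n = s C_n, so that the claim is a_k ≥ 3q/4. Eliminating D
(the gap 1 - 2C_n + 3C_n² - 2C_{n+1} equals s²D_n², and D_{n+1}² = s²(1 + C_n)²D_n²) turns the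
recursion into a second-order recursion for a_n,
  2s a_{n+2} = 2s a_n - 3a_n² + 3a_{n+1}² + g_n (2q - a_n)(1 + s + a_n),   g_n = s⁴D_n² ≥ 0.
For q ≤ 1/8 this recursion maps two consecutive values in the band [3q/4, 2q] into the band
again, each bound being an explicit sum of nonnegative products; since a_1 and a_2 lie in the
band, so does every a_n with n ≥ 1.
-/

section Band

variable {q s a b u : ℝ}

theorem band_step_lower (hq8 : 8 * q ≤ 1) (hs : s = 1 - 2 * q)
    (ha : a ∈ Set.Icc (3 * q / 4) (2 * q)) (hb : 3 * q / 4 ≤ b)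
    (hg : 0 ≤ s ^ 2 - 2 * s * a + 3 * a ^ 2 - 2 * s * b)
    (hu : 2 * s * u = 2 * s * a - 3 * a ^ 2 + 3 * b ^ 2
      + (s ^ 2 - 2 * s * a + 3 * a ^ 2 - 2 * s * b) * (2 * q - a) * (1 + s + a)) :
    3 * q / 4 ≤ u := by
  obtain ⟨ha₁, ha₂⟩ := ha
  have hq : 0 ≤ q := by linarith
  have key : 4 * s * (u - 3 * q / 4) =
      2 * (a - 3 * q / 4) * (2 * s - 3 * a - 9 * q / 4) + 6 * (b ^ 2 - (3 * q / 4) ^ 2)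
      + 2 * ((s ^ 2 - 2 * s * a + 3 * a ^ 2 - 2 * s * b) * (2 * q - a) * (1 + s + a)) := by
    linear_combination 2 * hu
  have h₁ : 0 ≤ (a - 3 * q / 4) * (2 * s - 3 * a - 9 * q / 4) :=
    mul_nonneg (by linarith) (by linarith)
  have h₂ : 0 ≤ b ^ 2 - (3 * q / 4) ^ 2 := sub_nonneg.2 (pow_le_pow_left₀ (by positivity) hb 2)
  have h₃ : 0 ≤ (s ^ 2 - 2 * s * a + 3 * a ^ 2 - 2 * s * b) * (2 * q - a) * (1 + s + a) :=
    mul_nonneg (mul_nonneg hg (by linarith)) (by linarith)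
  exact sub_nonneg.1 (nonneg_of_mul_nonneg_right (by linarith) (by linarith : (0 : ℝ) < 4 * s))

theorem band_step_upper (hq8 : 8 * q ≤ 1) (hs : s = 1 - 2 * q)
    (ha : a ∈ Set.Icc (3 * q / 4) (2 * q)) (hb : b ∈ Set.Icc (3 * q / 4) (2 * q))
    (hu : 2 * s * u = 2 * s * a - 3 * a ^ 2 + 3 * b ^ 2
      + (s ^ 2 - 2 * s * a + 3 * a ^ 2 - 2 * s * b) * (2 * q - a) * (1 + s + a)) :
    u ≤ 2 * q := by
  subst hs
  obtain ⟨A, rfl⟩ : ∃ A, a = 2 * q - A := ⟨2 * q - a, by ring⟩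
  obtain ⟨B, rfl⟩ : ∃ B, b = 2 * q - B := ⟨2 * q - b, by ring⟩
  obtain ⟨hA₁, hA₂⟩ := ha
  obtain ⟨hB₁, hB₂⟩ := hb
  have hq : 0 ≤ q := by linarith
  have key : 2 * (1 - 2 * q) * (2 * q - u) =
      B * (12 * q - 3 * B - 4 * A) + 8 * q * A * (1 - 8 * q) + A * B * (2 * A + 4 * q * (2 - A))
      + A ^ 2 * (4 * (5 * q - A) + 16 * q * (2 * q - A) + 3 * A ^ 2) := by
    linear_combination -hu
  have hA : 0 ≤ A := by linarith
  have hB : 0 ≤ B := by linarith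
  have h₁ : 0 ≤ B * (12 * q - 3 * B - 4 * A) := mul_nonneg hB (by linarith)
  have h₂ : 0 ≤ 8 * q * A * (1 - 8 * q) := mul_nonneg (by positivity) (by linarith)
  have h₃ : 0 ≤ A * B * (2 * A + 4 * q * (2 - A)) :=
    mul_nonneg (mul_nonneg hA hB) (by nlinarith)
  have h₄ : 0 ≤ A ^ 2 * (4 * (5 * q - A) + 16 * q * (2 * q - A) + 3 * A ^ 2) :=
    mul_nonneg (sq_nonneg A) (by nlinarith)
  exact sub_nonneg.1 (nonneg_of_mul_nonneg_right (by linarith)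
    (by linarith : (0 : ℝ) < 2 * (1 - 2 * q)))

theorem band_step (hq8 : 8 * q ≤ 1) (hs : s = 1 - 2 * q)
    (ha : a ∈ Set.Icc (3 * q / 4) (2 * q)) (hb : b ∈ Set.Icc (3 * q / 4) (2 * q))
    (hg : 0 ≤ s ^ 2 - 2 * s * a + 3 * a ^ 2 - 2 * s * b)
    (hu : 2 * s * u = 2 * s * a - 3 * a ^ 2 + 3 * b ^ 2
      + (s ^ 2 - 2 * s * a + 3 * a ^ 2 - 2 * s * b) * (2 * q - a) * (1 + s + a)) :
    u ∈ Set.Icc (3 * q / 4) (2 * q) :=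
  ⟨band_step_lower hq8 hs ha hb.1 hg hu, band_step_upper hq8 hs ha hb hu⟩

end Band

section FitchSequence

variable {p : ℝ} {C D : ℕ → ℝ}

theorem fitch_gap_eq
    (hC : ∀ n, 2 * C (n + 1) = 1 - 2 * C n + 3 * (C n) ^ 2 - (2 * p - 1) ^ 2 * (D n) ^ 2)
    (n : ℕ) :
    (2 * p - 1) ^ 2 - 2 * (2 * p - 1) * ((2 * p - 1) * C n) + 3 * ((2 * p - 1) * C n) ^ 2
      - 2 * (2 * p - 1) * ((2 * p - 1) * C (n + 1)) = ((2 * p - 1) ^ 2 * D n) ^ 2 := by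
  linear_combination (-(2 * p - 1) ^ 2) * hC n

theorem fitch_two_step
    (hC : ∀ n, 2 * C (n + 1) = 1 - 2 * C n + 3 * (C n) ^ 2 - (2 * p - 1) ^ 2 * (D n) ^ 2)
    (hD : ∀ n, D (n + 1) = (2 * p - 1) * (1 + C n) * D n) (n : ℕ) :
    2 * (2 * p - 1) * ((2 * p - 1) * C (n + 2)) =
      2 * (2 * p - 1) * ((2 * p - 1) * C n) - 3 * ((2 * p - 1) * C n) ^ 2
        + 3 * ((2 * p - 1) * C (n + 1)) ^ 2
        + ((2 * p - 1) ^ 2 - 2 * (2 * p - 1) * ((2 * p - 1) * C n) + 3 * ((2 * p - 1) * C n) ^ 2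
            - 2 * (2 * p - 1) * ((2 * p - 1) * C (n + 1)))
          * (2 * (1 - p) - (2 * p - 1) * C n) * (1 + (2 * p - 1) + (2 * p - 1) * C n) := by
  linear_combination (2 * p - 1) ^ 2 * (hC (n + 1)
    - (2 * p - 1) ^ 2 * (D (n + 1) + (2 * p - 1) * (1 + C n) * D n) * hD n
    - (2 * p - 1) ^ 2 * (1 + C n) ^ 2 * hC n)

theorem fitch_C_one (hC0 : C 0 = 0) (hD0 : D 0 = 1)
    (hC : ∀ n, 2 * C (n + 1) = 1 - 2 * C n + 3 * (C n) ^ 2 - (2 * p - 1) ^ 2 * (D n) ^ 2) :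
    C 1 = 2 * p * (1 - p) := by
  have h := hC 0
  rw [hC0, hD0] at h
  linear_combination h / 2

theorem fitch_D_one (hC0 : C 0 = 0) (hD0 : D 0 = 1)
    (hD : ∀ n, D (n + 1) = (2 * p - 1) * (1 + C n) * D n) :
    D 1 = 2 * p - 1 := by
  rw [hD 0, hC0, hD0]; ring

theorem fitch_band_one (hC0 : C 0 = 0) (hD0 : D 0 = 1)
    (hC : ∀ n, 2 * C (n + 1) = 1 - 2 * C n + 3 * (C n) ^ 2 - (2 * p - 1) ^ 2 * (D n) ^ 2)
    (hp1 : 7 / 8 ≤ p) (hp2 : p ≤ 1) :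
    (2 * p - 1) * C 1 ∈ Set.Icc (3 * (1 - p) / 4) (2 * (1 - p)) := by
  rw [fitch_C_one hC0 hD0 hC]
  have hq : 0 ≤ 1 - p := by linarith
  constructor <;> nlinarith [mul_nonneg hq hq, mul_nonneg (mul_nonneg hq hq) hq]

theorem fitch_band_two (hC0 : C 0 = 0) (hD0 : D 0 = 1)
    (hC : ∀ n, 2 * C (n + 1) = 1 - 2 * C n + 3 * (C n) ^ 2 - (2 * p - 1) ^ 2 * (D n) ^ 2)
    (hD : ∀ n, D (n + 1) = (2 * p - 1) * (1 + C n) * D n)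
    (hp1 : 7 / 8 ≤ p) (hp2 : p ≤ 1) :
    (2 * p - 1) * C 2 ∈ Set.Icc (3 * (1 - p) / 4) (2 * (1 - p)) := by
  have h := hC 1
  rw [fitch_C_one hC0 hD0 hC, fitch_D_one hC0 hD0 hD] at h
  have hq : 0 ≤ 1 - p := by linarith
  constructor <;> nlinarith [mul_nonneg hq hq, mul_nonneg (mul_nonneg hq hq) hq]

theorem fitch_band (hC0 : C 0 = 0) (hD0 : D 0 = 1)
    (hC : ∀ n, 2 * C (n + 1) = 1 - 2 * C n + 3 * (C n) ^ 2 - (2 * p - 1) ^ 2 * (D n) ^ 2)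
    (hD : ∀ n, D (n + 1) = (2 * p - 1) * (1 + C n) * D n)
    (hp1 : 7 / 8 ≤ p) (hp2 : p ≤ 1) (n : ℕ) (hn : 1 ≤ n) :
    (2 * p - 1) * C n ∈ Set.Icc (3 * (1 - p) / 4) (2 * (1 - p)) := by
  have consecutive : ∀ m, (2 * p - 1) * C (m + 1) ∈ Set.Icc (3 * (1 - p) / 4) (2 * (1 - p)) ∧
      (2 * p - 1) * C (m + 2) ∈ Set.Icc (3 * (1 - p) / 4) (2 * (1 - p)) := by
    intro m
    induction m with
    | zero => exact ⟨fitch_band_one hC0 hD0 hC hp1 hp2, fitch_band_two hC0 hD0 hC hD hp1 hp2⟩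
    | succ m ih =>
      refine ⟨ih.2, band_step (by linarith) (by ring) ih.1 ih.2 ?_
        (fitch_two_step hC hD (m + 1))⟩
      rw [fitch_gap_eq hC]
      positivity
  obtain ⟨m, rfl⟩ : ∃ m, n = m + 1 := ⟨n - 1, by omega⟩
  exact (consecutive m).1

end FitchSequence

/-- For 7/8 ≤ p ≤ 1 and k ≥ 2, c_k = 2(1-p)/(2p-1) - C_k ≤ 5(1-p)/(4(2p-1)). -/
theorem fitch_c_upper_bound
    (p : ℝ) (C D : ℕ → ℝ)
    (hC0 : C 0 = 0) (hD0 : D 0 = 1)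
    (hC : ∀ n, 2 * C (n + 1) =
        1 - 2 * C n + 3 * (C n) ^ 2 - (2 * p - 1) ^ 2 * (D n) ^ 2)
    (hD : ∀ n, D (n + 1) = (2 * p - 1) * (1 + C n) * D n)
    (hp1 : 7 / 8 ≤ p) (hp2 : p ≤ 1)
    (k : ℕ) (hk : 2 ≤ k) :
    2 * (1 - p) / (2 * p - 1) - C k ≤ 5 * (1 - p) / (4 * (2 * p - 1)) := by
  have hs : 0 < 2 * p - 1 := by linarith
  have hlow := (fitch_band hC0 hD0 hC hD hp1 hp2 k (by omega)).1
  have split : 2 * (1 - p) / (2 * p - 1) - C k = 5 * (1 - p) / (4 * (2 * p - 1))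
      - (4 * ((2 * p - 1) * C k) - 3 * (1 - p)) / (4 * (2 * p - 1)) := by
    field_simp
    ring
  rw [split]
  exact sub_le_self _ (div_nonneg (by linarith) (by positivity))
end

section
/- Let p be real with 7/8 ≤ p ≤ 1. Then the sequence C_n(p) converges to 2(1−p)/(2p−1) as n → ∞. -/
/-!
Let `a_n`, `b_n` be the probabilities that Fitch returns the true and the wrong root state, so that
`C_n = 1 - a_n - b_n` and `D_n = a_n - b_n`; one more level of the tree maps `(a, b)` to
`(fitchStep p a b, fitchStep p b a)`. Once `4p² ≥ 2p + 1` (that is, `p ≥ (1 + √5)/4`), this map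
preserves `0 ≤ b ≤ a`, `0 ≤ 1 - a - b ≤ 1/2`, pushes `1 - a - b` above `(1 - p)/p`, and on that
region it makes `a_n` decrease and `b_n` increase from `n = 1` on. Hence `C_n → γ`, `D_n → δ`,
with `(γ, δ)` a fixed point of the recursion: either `(2p - 1)(1 + γ) = 1`, which is the claim, or
`δ = 0`, `γ = 1/3`. For `p > 7/8` the latter is impossible, since then
`D_{n+1}/D_n → (2p - 1)·4/3 > 1` while `D_n > 0`; at `p = 7/8` the two alternatives agree.
-/

open Filter Topology

/-- If the two subtrees below a node return the true state, the wrong state and `{0,1}` with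
probabilities `x`, `y`, `1 - x - y`, then each child, seen across its branch, carries the true state
with probability `p * x + (1 - p) * y`, and Fitch returns the true state at the node with
probability `fitchStep p x y` (and the wrong one with probability `fitchStep p y x`). -/
def fitchStep (p x y : ℝ) : ℝ :=
  (p * x + (1 - p) * y) ^ 2 + 2 * (p * x + (1 - p) * y) * (1 - x - y)

lemma one_sub_fitchStep_sub_fitchStep_swap (p x y : ℝ) :
    1 - fitchStep p x y - fitchStep p y x =
      2 * (p * x + (1 - p) * y) * (p * y + (1 - p) * x) + (1 - x - y) ^ 2 := by
  unfold fitchStep; ring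

lemma fitchStep_le_fitchStep {p x₁ y₁ x₂ y₂ : ℝ} (hx : x₂ ≤ x₁) (hy : y₁ ≤ y₂)
    (h₁ : (1 - p) * (p * x₂ + (1 - p) * y₂) ≤ p * (1 - x₁ - y₁))
    (h₂ : (1 - p) * (1 - x₁ - y₁) ≤ p * (p * x₂ + (1 - p) * y₂)) :
    fitchStep p x₂ y₂ ≤ fitchStep p x₁ y₁ := by
  have expand : fitchStep p x₁ y₁ - fitchStep p x₂ y₂ =
      (p * (x₁ - x₂) - (1 - p) * (y₂ - y₁)) ^ 2
        + 2 * (x₁ - x₂) * (p * (1 - x₁ - y₁) - (1 - p) * (p * x₂ + (1 - p) * y₂))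
        + 2 * (y₂ - y₁) * (p * (p * x₂ + (1 - p) * y₂) - (1 - p) * (1 - x₁ - y₁)) := by
    unfold fitchStep; ring
  nlinarith [sq_nonneg (p * (x₁ - x₂) - (1 - p) * (y₂ - y₁)),
    mul_nonneg (sub_nonneg.2 hx) (sub_nonneg.2 h₁), mul_nonneg (sub_nonneg.2 hy) (sub_nonneg.2 h₂)]

lemma one_sub_le_mul_one_sub_fitchStep_sub_fitchStep_swap {p x y : ℝ} (hp0 : 0 < p)
    (hp1 : p ≤ 1) (hp : 2 * p + 1 ≤ 4 * p ^ 2) (hx : 0 ≤ x) (hy : 0 ≤ y) :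
    1 - p ≤ p * (1 - fitchStep p x y - fitchStep p y x) := by
  set q := 1 - p
  set c := 1 - x - y
  have hprod : p * q * (1 - c) ^ 2 ≤ (p * x + q * y) * (p * y + q * x) := by
    have : (p * x + q * y) * (p * y + q * x) = p * q * (1 - c) ^ 2 + (p - q) ^ 2 * (x * y) := by
      ring
    nlinarith [mul_nonneg (sq_nonneg (p - q)) (mul_nonneg hx hy)]
  have hmin : (1 + 2 * p * q) * (p * (2 * p * q * (1 - c) ^ 2 + c ^ 2) - q) =
      p * ((1 + 2 * p * q) * c - 2 * p * q) ^ 2 + q * (4 * p ^ 2 - 2 * p - 1) := by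
    ring
  have hq : 0 ≤ q := by linarith
  have hpos : 0 < 1 + 2 * p * q := by positivity
  have hfloor : q ≤ p * (2 * p * q * (1 - c) ^ 2 + c ^ 2) := by
    nlinarith [mul_nonneg hp0.le (sq_nonneg ((1 + 2 * p * q) * c - 2 * p * q)),
      mul_nonneg hq (by linarith : (0:ℝ) ≤ 4 * p ^ 2 - 2 * p - 1)]
  rw [one_sub_fitchStep_sub_fitchStep_swap]
  nlinarith

structure FitchBounds (x y : ℝ) : Prop where
  nonneg : 0 ≤ y
  le : y ≤ x
  ambiguous_nonneg : 0 ≤ 1 - x - y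
  ambiguous_le_half : 1 - x - y ≤ 1 / 2

namespace FitchBounds

variable {p x y x₁ y₁ x₂ y₂ : ℝ}

lemma step (hp : 1 / 2 ≤ p) (hp1 : p ≤ 1) (h : FitchBounds x y) :
    FitchBounds (fitchStep p x y) (fitchStep p y x) := by
  obtain ⟨hy, hyx, hc, hc2⟩ := h
  have hA : 0 ≤ p * x + (1 - p) * y := by nlinarith
  have hB : 0 ≤ p * y + (1 - p) * x := by nlinarith
  have hBA : p * y + (1 - p) * x ≤ p * x + (1 - p) * y := by nlinarith
  have hamb := one_sub_fitchStep_sub_fitchStep_swap p x y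
  refine ⟨?_, ?_, ?_, ?_⟩
  · unfold fitchStep; nlinarith
  · unfold fitchStep; nlinarith [mul_nonneg (sub_nonneg.2 hBA) (add_nonneg (add_nonneg hA hB) hc)]
  · rw [hamb]; positivity
  · rw [hamb]
    nlinarith [sq_nonneg (p * x + (1 - p) * y - (p * y + (1 - p) * x)),
      mul_nonneg hc (by linarith : (0:ℝ) ≤ 2 / 3 - (1 - x - y))]

lemma fitchStep_le (hp : 2 * p + 1 ≤ 4 * p ^ 2) (hp0 : 1 / 2 ≤ p) (hp1 : p ≤ 1)
    (h₁ : FitchBounds x₁ y₁) (h₂ : FitchBounds x₂ y₂) (hc₁ : 1 - p ≤ p * (1 - x₁ - y₁))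
    (hx : x₂ ≤ x₁) (hy : y₁ ≤ y₂) :
    fitchStep p x₂ y₂ ≤ fitchStep p x₁ y₁ := by
  obtain ⟨-, -, -, hc₁2⟩ := h₁
  obtain ⟨hy₂, hyx₂, hc₂, hc₂2⟩ := h₂
  have hz₂ : p * x₂ + (1 - p) * y₂ ≤ 1 := by nlinarith
  have hx₂ : 1 / 4 ≤ x₂ := by linarith
  have hp45 : 4 / 5 ≤ p := by nlinarith
  refine fitchStep_le_fitchStep hx hy ?_ ?_
  · nlinarith [mul_nonneg (by linarith : (0:ℝ) ≤ 1 - p) (sub_nonneg.2 hz₂)]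
  · nlinarith [mul_nonneg (by linarith : (0:ℝ) ≤ 1 - p) (sub_nonneg.2 hc₁2),
      mul_le_mul_of_nonneg_left hx₂ (by linarith : (0:ℝ) ≤ p),
      mul_nonneg (by linarith : (0:ℝ) ≤ 1 - p) hy₂]

lemma fitchStep_swap_le (hp : 2 * p + 1 ≤ 4 * p ^ 2) (hp0 : 1 / 2 ≤ p) (hp1 : p ≤ 1)
    (h₁ : FitchBounds x₁ y₁) (h₂ : FitchBounds x₂ y₂) (hc₂ : 1 - p ≤ p * (1 - x₂ - y₂))
    (hy₁ : (1 - p) ^ 2 ≤ y₁) (hx : x₂ ≤ x₁) (hy : y₁ ≤ y₂) :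
    fitchStep p y₁ x₁ ≤ fitchStep p y₂ x₂ := by
  obtain ⟨hy₁0, hyx₁, hc₁, hc₁2⟩ := h₁
  obtain ⟨-, -, -, hc₂2⟩ := h₂
  have hz₁ : p * y₁ + (1 - p) * x₁ ≤ 1 := by nlinarith
  refine fitchStep_le_fitchStep hy hx ?_ ?_
  · nlinarith [mul_nonneg (by linarith : (0:ℝ) ≤ 1 - p) (sub_nonneg.2 hz₁)]
  · nlinarith [mul_nonneg (mul_nonneg (by linarith : (0:ℝ) ≤ p) (by linarith : (0:ℝ) ≤ 1 - p))
      (by linarith : (0:ℝ) ≤ 1 / 2 - (1 - x₁ - y₁)),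
      mul_nonneg (mul_nonneg (by linarith : (0:ℝ) ≤ p) (by linarith : (0:ℝ) ≤ 2 * p - 1))
      (by linarith : (0:ℝ) ≤ y₁ - (1 - p) ^ 2),
      mul_nonneg (by linarith : (0:ℝ) ≤ 1 - p) (by linarith : (0:ℝ) ≤ 1 / 2 - (1 - x₂ - y₂)),
      mul_nonneg (sq_nonneg (1 - p)) (by linarith : (0:ℝ) ≤ 4 * p ^ 2 - 2 * p - 1)]

end FitchBounds

structure IsFitchSeq_s13 (p : ℝ) (a b : ℕ → ℝ) : Prop where
  zero_fst : a 0 = 1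
  zero_snd : b 0 = 0
  succ_fst (n : ℕ) : a (n + 1) = fitchStep p (a n) (b n)
  succ_snd (n : ℕ) : b (n + 1) = fitchStep p (b n) (a n)

namespace IsFitchSeq_s13

variable {p : ℝ} {a b : ℕ → ℝ}

lemma bounds (h : IsFitchSeq_s13 p a b) (hp0 : 1 / 2 ≤ p) (hp1 : p ≤ 1) (n : ℕ) :
    FitchBounds (a n) (b n) := by
  induction n with
  | zero => rw [h.zero_fst, h.zero_snd]; constructor <;> norm_num
  | succ n ih => rw [h.succ_fst, h.succ_snd]; exact ih.step hp0 hp1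

lemma one_sub_le_mul_ambiguous (h : IsFitchSeq_s13 p a b) (hp : 2 * p + 1 ≤ 4 * p ^ 2)
    (hp0 : 1 / 2 ≤ p) (hp1 : p ≤ 1) (n : ℕ) : 1 - p ≤ p * (1 - a (n + 1) - b (n + 1)) := by
  have hn := h.bounds hp0 hp1 n
  rw [h.succ_fst, h.succ_snd]
  exact one_sub_le_mul_one_sub_fitchStep_sub_fitchStep_swap (by linarith) hp1 hp
    (hn.nonneg.trans hn.le) hn.nonneg

lemma antitone_monotone_succ (h : IsFitchSeq_s13 p a b) (hp : 2 * p + 1 ≤ 4 * p ^ 2)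
    (hp0 : 1 / 2 ≤ p) (hp1 : p ≤ 1) (n : ℕ) :
    a (n + 2) ≤ a (n + 1) ∧ b (n + 1) ≤ b (n + 2) ∧ (1 - p) ^ 2 ≤ b (n + 1) := by
  induction n with
  | zero =>
    have ha1 : a 1 = p ^ 2 := by rw [h.succ_fst, h.zero_fst, h.zero_snd]; unfold fitchStep; ring
    have hb1 : b 1 = (1 - p) ^ 2 := by
      rw [h.succ_snd, h.zero_fst, h.zero_snd]; unfold fitchStep; ring
    refine ⟨?_, ?_, hb1.ge⟩
    · rw [show 0 + 2 = 1 + 1 from rfl, h.succ_fst 1, ha1, hb1]; unfold fitchStep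
      nlinarith [mul_nonneg (sq_nonneg (1 - p)) (by nlinarith : (0:ℝ) ≤ 3 * p ^ 2 - 1)]
    · rw [show 0 + 2 = 1 + 1 from rfl, h.succ_snd 1, ha1, hb1]; unfold fitchStep
      nlinarith [mul_nonneg (sq_nonneg (1 - p)) (by nlinarith : (0:ℝ) ≤ 5 * p ^ 2 - 1)]
  | succ n ih =>
    obtain ⟨ha, hb, hb₁⟩ := ih
    have h₁ := h.bounds hp0 hp1 (n + 1)
    have h₂ := h.bounds hp0 hp1 (n + 2)
    refine ⟨?_, ?_, hb₁.trans hb⟩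
    · exact (h.succ_fst _).trans_le <| (h₁.fitchStep_le hp hp0 hp1 h₂
        (h.one_sub_le_mul_ambiguous hp hp0 hp1 n) ha hb).trans_eq (h.succ_fst _).symm
    · exact (h.succ_snd _).trans_le <| (h₁.fitchStep_swap_le hp hp0 hp1 h₂
        (h.one_sub_le_mul_ambiguous hp hp0 hp1 (n + 1)) hb₁ ha hb).trans_eq (h.succ_snd _).symm

lemma exists_tendsto (h : IsFitchSeq_s13 p a b) (hp : 2 * p + 1 ≤ 4 * p ^ 2) (hp0 : 1 / 2 ≤ p)
    (hp1 : p ≤ 1) : ∃ α β, Tendsto a atTop (𝓝 α) ∧ Tendsto b atTop (𝓝 β) := by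
  have ha : Antitone fun n => a (n + 1) :=
    antitone_nat_of_succ_le fun n => (h.antitone_monotone_succ hp hp0 hp1 n).1
  have hb : Monotone fun n => b (n + 1) :=
    monotone_nat_of_le_succ fun n => (h.antitone_monotone_succ hp hp0 hp1 n).2.1
  have ha_bdd : BddBelow (Set.range fun n => a (n + 1)) :=
    ⟨0, Set.forall_mem_range.2 fun n => (h.bounds hp0 hp1 _).nonneg.trans (h.bounds hp0 hp1 _).le⟩
  have hb_bdd : BddAbove (Set.range fun n => b (n + 1)) :=
    ⟨1, Set.forall_mem_range.2 fun n => by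
      have := h.bounds hp0 hp1 (n + 1); linarith [this.le, this.ambiguous_nonneg]⟩
  exact ⟨_, _, (tendsto_add_atTop_iff_nat 1).1 (tendsto_atTop_ciInf ha ha_bdd),
    (tendsto_add_atTop_iff_nat 1).1 (tendsto_atTop_ciSup hb hb_bdd)⟩

end IsFitchSeq_s13

lemma isFitchSeq_of_recurrence {p : ℝ} {C D : ℕ → ℝ} (hC0 : C 0 = 0) (hD0 : D 0 = 1)
    (hC : ∀ n, 2 * C (n + 1) = 1 - 2 * C n + 3 * (C n) ^ 2 - (2 * p - 1) ^ 2 * (D n) ^ 2)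
    (hD : ∀ n, D (n + 1) = (2 * p - 1) * (1 + C n) * D n) :
    IsFitchSeq_s13 p (fun n => (1 - C n + D n) / 2) (fun n => (1 - C n - D n) / 2) where
  zero_fst := by simp [hC0, hD0]
  zero_snd := by simp [hC0, hD0]
  succ_fst n := by unfold fitchStep; linear_combination hD n / 2 - hC n / 4
  succ_snd n := by unfold fitchStep; linear_combination -hD n / 2 - hC n / 4

lemma fitch_fixed_point {p γ δ : ℝ} (hp : 7 / 8 ≤ p) (hγ : γ ≤ 1 / 2)
    (hfixC : 2 * γ = 1 - 2 * γ + 3 * γ ^ 2 - (2 * p - 1) ^ 2 * δ ^ 2)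
    (hfixD : δ = (2 * p - 1) * (1 + γ) * δ) :
    (2 * p - 1) * (1 + γ) = 1 ∨ δ = 0 ∧ 1 < (2 * p - 1) * (1 + γ) := by
  by_cases hρ : (2 * p - 1) * (1 + γ) = 1
  · exact .inl hρ
  have hδ : δ = 0 := by
    have : ((2 * p - 1) * (1 + γ) - 1) * δ = 0 := by linear_combination -hfixD
    exact (mul_eq_zero.1 this).resolve_left (sub_ne_zero.2 hρ)
  have hγ3 : γ = 1 / 3 := by
    have : (3 * γ - 1) * (γ - 1) = 0 := by rw [hδ] at hfixC; linear_combination -hfixC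
    linarith [(mul_eq_zero.1 this).resolve_right (by linarith)]
  exact .inr ⟨hδ, lt_of_le_of_ne (by rw [hγ3]; linarith) (Ne.symm hρ)⟩

lemma not_tendsto_zero_of_ratio_tendsto {u r : ℕ → ℝ} {ρ : ℝ} (hu : ∀ n, 0 < u n)
    (hur : ∀ n, u (n + 1) = r n * u n) (hr : Tendsto r atTop (𝓝 ρ)) (hρ : 1 < ρ) :
    ¬ Tendsto u atTop (𝓝 0) := by
  intro hu0
  obtain ⟨N, hN⟩ := eventually_atTop.1 (hr.eventually (eventually_ge_nhds hρ))
  have hgrow : ∀ m, N ≤ m → u N ≤ u m := by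
    intro m hm
    induction m, hm using Nat.le_induction with
    | base => exact le_rfl
    | succ m hm ih => rw [hur]; nlinarith [hN m hm, hu m]
  linarith [hu N, ge_of_tendsto hu0 (eventually_atTop.2 ⟨N, hgrow⟩)]

/-- For 7/8 ≤ p ≤ 1, C_n converges to 2(1-p)/(2p-1). -/
theorem fitch_C_tendsto
    (p : ℝ) (C D : ℕ → ℝ)
    (hC0 : C 0 = 0) (hD0 : D 0 = 1)
    (hC : ∀ n, 2 * C (n + 1) =
        1 - 2 * C n + 3 * (C n) ^ 2 - (2 * p - 1) ^ 2 * (D n) ^ 2)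
    (hD : ∀ n, D (n + 1) = (2 * p - 1) * (1 + C n) * D n)
    (hp1 : 7 / 8 ≤ p) (hp2 : p ≤ 1) :
    Tendsto C atTop (nhds (2 * (1 - p) / (2 * p - 1))) := by
  have hp0 : 1 / 2 ≤ p := by linarith
  have hseq := isFitchSeq_of_recurrence hC0 hD0 hC hD
  obtain ⟨α, β, hα, hβ⟩ := hseq.exists_tendsto (by nlinarith) hp0 hp2
  have hCγ : Tendsto C atTop (𝓝 (1 - α - β)) :=
    ((tendsto_const_nhds.sub hα).sub hβ).congr fun n => by ring
  have hDδ : Tendsto D atTop (𝓝 (α - β)) := (hα.sub hβ).congr fun n => by ring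
  have hratio : Tendsto (fun n => (2 * p - 1) * (1 + C n)) atTop
      (𝓝 ((2 * p - 1) * (1 + (1 - α - β)))) := (hCγ.const_add 1).const_mul _
  have hfixD := tendsto_nhds_unique (hDδ.comp (tendsto_add_atTop_nat 1))
    ((hratio.mul hDδ).congr fun n => (hD n).symm)
  have hfixC := tendsto_nhds_unique ((hCγ.comp (tendsto_add_atTop_nat 1)).const_mul 2)
    (((((hCγ.const_mul 2).const_sub 1).add ((hCγ.pow 2).const_mul 3)).sub
      ((hDδ.pow 2).const_mul ((2 * p - 1) ^ 2))).congr fun n => (hC n).symm)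
  have hγ : 1 - α - β ≤ 1 / 2 :=
    le_of_tendsto' hCγ fun n => by linarith [(hseq.bounds hp0 hp2 n).ambiguous_le_half]
  rcases fitch_fixed_point hp1 hγ hfixC hfixD with hρ | ⟨hδ, hρ⟩
  · convert hCγ using 2
    rw [div_eq_iff (by linarith)]
    linarith
  · have hD_pos (n : ℕ) : 0 < D n := by
      induction n with
      | zero => rw [hD0]; exact one_pos
      | succ n ih =>
        have hC_nonneg : 0 ≤ C n := by linarith [(hseq.bounds hp0 hp2 n).ambiguous_nonneg]
        rw [hD n]
        exact mul_pos (mul_pos (by linarith) (by linarith)) ih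
    exact (not_tendsto_zero_of_ratio_tendsto hD_pos hD hratio hρ (hδ ▸ hDδ)).elim
end

section
/- Let p be real with 7/8 ≤ p ≤ 1. Then the sequence D_n(p)² converges to (8p−7)(4p−3)/(2p−1)⁴ as n → ∞. -/
/-!
Put `b = 2p - 1`, `v = 1/3 - C` and `e = b² D²`. The recursion becomes
`v' = (e - 3v²)/2`, `e' = (b (4/3 - v))² e`, whose relevant fixed point is `v = w`, `e = 2w + 3w²`,
where `b (4/3 - w) = 1`. For `3/4 ≤ b ≤ 1` the region `w ≤ v ≤ 1/3`, `3v² + 2w ≤ e ≤ b²` is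
invariant and contains the starting point `(1/3, b²)`. On it the factor `b (4/3 - v)` lies in
`[0, 1]`, so `e` decreases to some limit `l`. If `l ≠ 0` the factor tends to `1`, i.e. `v → w`,
and passing to the limit in `v' = (e - 3v²)/2` gives `l = 2w + 3w²`; if `l = 0` then `w = 0`.
-/

open Filter Topology Set

theorem nonneg_of_concave_quadratic_s14 {a β γ l u x : ℝ} (ha : a ≤ 0)
    (hl : 0 ≤ a * l ^ 2 + β * l + γ) (hu : 0 ≤ a * u ^ 2 + β * u + γ)
    (hlx : l ≤ x) (hxu : x ≤ u) : 0 ≤ a * x ^ 2 + β * x + γ := by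
  rcases (hlx.trans hxu).eq_or_lt with hlu | hlu
  · obtain rfl : x = l := le_antisymm (hlu ▸ hxu) hlx
    exact hl
  have interpolation : (u - l) * (a * x ^ 2 + β * x + γ) =
      (u - x) * (a * l ^ 2 + β * l + γ) + (x - l) * (a * u ^ 2 + β * u + γ)
        - a * ((x - l) * (u - x) * (u - l)) := by ring
  refine nonneg_of_mul_nonneg_right ?_ (sub_pos.2 hlu)
  rw [interpolation]
  have : 0 ≤ (x - l) * (u - x) * (u - l) := by
    apply mul_nonneg (mul_nonneg _ _) <;> linarith
  nlinarith [mul_nonneg (sub_nonneg.2 hxu) hl, mul_nonneg (sub_nonneg.2 hlx) hu]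

section Fitch

variable {b w v : ℝ}

-- In the coordinates of the header, one step of the recursion for `(C, D)` is `fitchMap b`.
noncomputable def fitchMap (b : ℝ) (q : ℝ × ℝ) : ℝ × ℝ :=
  ((q.2 - 3 * q.1 ^ 2) / 2, (b * (4 / 3 - q.1)) ^ 2 * q.2)

def fitchRegion (b w : ℝ) : Set (ℝ × ℝ) :=
  {q | w ≤ q.1 ∧ q.1 ≤ 1 / 3 ∧ 3 * q.1 ^ 2 + 2 * w ≤ q.2 ∧ q.2 ≤ b ^ 2}

theorem fixedPoint_mem_Icc (hb : 3 / 4 ≤ b) (hb1 : b ≤ 1) (hw : b * (4 / 3 - w) = 1) :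
    w ∈ Icc 0 (1 / 3) :=
  ⟨by nlinarith, by nlinarith⟩

theorem sq_le_of_fixedPoint (hb : 3 / 4 ≤ b) (hb1 : b ≤ 1) (hw : b * (4 / 3 - w) = 1) :
    b ^ 2 ≤ 2 / 3 + 3 * w ^ 2 := by
  nlinarith [mul_nonneg (pow_nonneg (sub_nonneg.2 hb1) 3) (by linarith : (0 : ℝ) ≤ b + 3)]

theorem factor_mem_Icc (hb : 0 ≤ b) (hw : b * (4 / 3 - w) = 1) (hwv : w ≤ v)
    (hv : v ≤ 1 / 3) : b * (4 / 3 - v) ∈ Icc 0 1 :=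
  ⟨by nlinarith, by nlinarith⟩

/- The two endpoint inequalities below are certificates: with `X = b (v - w)`, `Y = 4b - 3`,
`Z = b (1/3 - v)`, all nonnegative, a power of `b` times the gap is a polynomial in `X, Y, Z`
with nonnegative coefficients. -/

theorem gap_nonneg_at_lower (hb : 3 / 4 ≤ b) (hw : b * (4 / 3 - w) = 1) (hwv : w ≤ v)
    (hv : v ≤ 1 / 3) : 3 * w ^ 2 + 2 * w ≤ (b * (4 / 3 - v)) ^ 2 * (3 * v ^ 2 + 2 * w) := by
  have hX : 0 ≤ b * (v - w) := by nlinarith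
  have hY : 0 ≤ 4 * b - 3 := by linarith
  have hZ : 0 ≤ b * (1 / 3 - v) := by nlinarith
  set X := b * (v - w)
  set Y := 4 * b - 3
  set Z := b * (1 / 3 - v)
  have certificate : b ^ 2 * ((b * (4 / 3 - v)) ^ 2 * (3 * v ^ 2 + 2 * w) - (3 * w ^ 2 + 2 * w)) =
      31/8 * X*Y*Z + 1/2 * X*Y*Z^2 + 1/8 * X*Y^2*Z + 27/16 * X^2 + 9/2 * X^2*Z + 3 * X^2*Z^2
        + 17/8 * X^2*Y + 3/16 * X^2*Y^2 := by
    rw [show X = b * v - 4 / 3 * b + 1 by linear_combination hw]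
    linear_combination (-3 + 6*b + 3*b*w - 32/9*b^3 + 16/3*b^3*v - 2*b^3*v^2) * hw
  have : 0 ≤ b ^ 2 * ((b * (4 / 3 - v)) ^ 2 * (3 * v ^ 2 + 2 * w) - (3 * w ^ 2 + 2 * w)) := by
    rw [certificate]; positivity
  linarith [nonneg_of_mul_nonneg_right this (by positivity)]

theorem gap_nonneg_at_upper (hb : 3 / 4 ≤ b) (hw : b * (4 / 3 - w) = 1) (hwv : w ≤ v)
    (hv : v ≤ 1 / 3) : 3 * ((b ^ 2 - 3 * v ^ 2) / 2) ^ 2 + 2 * w ≤ (b * (4 / 3 - v)) ^ 2 * b ^ 2 := by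
  have hX : 0 ≤ b * (v - w) := by nlinarith
  have hY : 0 ≤ 4 * b - 3 := by linarith
  have hZ : 0 ≤ b * (1 / 3 - v) := by nlinarith
  set X := b * (v - w)
  set Y := 4 * b - 3
  set Z := b * (1 / 3 - v)
  have certificate :
      b ^ 4 * ((b * (4 / 3 - v)) ^ 2 * b ^ 2 - (3 * ((b ^ 2 - 3 * v ^ 2) / 2) ^ 2 + 2 * w)) =
      6237/16384 * Z^2 + 81/16 * Z^3 + 12825/8192 * Y*Z^2 + 63/16 * Y*Z^3 + 15507/16384 * Y^2*Z^2
        + 879/8192 * Y^3*Z^2 + 207/2048 * Y^3*Z^3 + 81/4096 * Y^4*Z^3 + 3/4096 * Y^5*Z^3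
        + 22221/8192 * X*Z + 27/4 * X*Z^3 + 10881/4096 * X*Y*Z + 5169/8192 * X*Y^2*Z
        + 417/1024 * X*Y^2*Z^2 + 685/2048 * X*Y^3*Z^2 + 211/4096 * X*Y^4*Z^2 + 9/4096 * X*Y^5*Z^2
        + 22977/16384 * X^2 + 13581/8192 * X^2*Y + 12303/16384 * X^2*Y^2 + 417/1024 * X^2*Y^2*Z
        + 683/4096 * X^2*Y^3 + 239/1024 * X^2*Y^3*Z + 335/16384 * X^2*Y^4 + 65/2048 * X^2*Y^4*Z
        + 13/8192 * X^2*Y^5 + 3/2048 * X^2*Y^5*Z + 1/16384 * X^2*Y^6 := by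
    rw [show X = b * v - 4 / 3 * b + 1 by linear_combination hw]
    linear_combination 2 * b ^ 3 * hw
  have : 0 ≤ b ^ 4 *
      ((b * (4 / 3 - v)) ^ 2 * b ^ 2 - (3 * ((b ^ 2 - 3 * v ^ 2) / 2) ^ 2 + 2 * w)) := by
    rw [certificate]; positivity
  linarith [nonneg_of_mul_nonneg_right this (by positivity)]

theorem mapsTo_fitchMap (hb : 3 / 4 ≤ b) (hb1 : b ≤ 1) (hw : b * (4 / 3 - w) = 1) :
    MapsTo (fitchMap b) (fitchRegion b w) (fitchRegion b w) := by
  rintro ⟨v, e⟩ ⟨hwv, hv, hle, heb⟩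
  obtain ⟨hw0, -⟩ := fixedPoint_mem_Icc hb hb1 hw
  obtain ⟨hr0, hr1⟩ := factor_mem_Icc (by linarith) hw hwv hv
  have hr2 : (b * (4 / 3 - v)) ^ 2 ≤ 1 := pow_le_one₀ hr0 hr1
  have he0 : 0 ≤ e := by nlinarith
  refine ⟨by simp only [fitchMap]; linarith, ?_, ?_, ?_⟩
  · simp only [fitchMap]
    nlinarith [sq_le_of_fixedPoint hb hb1 hw]
  · -- `e' - 3v'² - 2w` is a concave quadratic in `e`, so it suffices to check it at the endpoints.
    have := nonneg_of_concave_quadratic_s14 (a := -3 / 4) (β := (b * (4 / 3 - v)) ^ 2 + 9 / 2 * v ^ 2)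
      (γ := -(27 / 4 * v ^ 4) - 2 * w) (by norm_num)
      (by linear_combination gap_nonneg_at_lower hb hw hwv hv)
      (by linear_combination gap_nonneg_at_upper hb hw hwv hv) hle heb
    simp only [fitchMap]
    linear_combination this
  · simp only [fitchMap]
    nlinarith [mul_le_of_le_one_left he0 hr2]

theorem initial_mem_fitchRegion (hb : 3 / 4 ≤ b) (hb1 : b ≤ 1) (hw : b * (4 / 3 - w) = 1) :
    (1 / 3, b ^ 2) ∈ fitchRegion b w :=
  ⟨(fixedPoint_mem_Icc hb hb1 hw).2, le_rfl,
    by nlinarith [mul_nonneg (sq_nonneg (b - 1)) (by linarith : (0 : ℝ) ≤ b + 2)], le_rfl⟩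

theorem tendsto_fst_of_fitchMap (hb : 0 < b) (hw : b * (4 / 3 - w) = 1) {q : ℕ → ℝ × ℝ}
    (hq : ∀ n, q (n + 1) = fitchMap b (q n)) (hmem : ∀ n, q n ∈ fitchRegion b w) {l : ℝ}
    (hl : l ≠ 0) (he : Tendsto (fun n => (q n).2) atTop (𝓝 l)) :
    Tendsto (fun n => (q n).1) atTop (𝓝 w) := by
  have hratio : Tendsto (fun n => (q (n + 1)).2 / (q n).2) atTop (𝓝 1) := by
    have := ((tendsto_add_atTop_iff_nat 1).2 he).div he hl
    rwa [div_self hl] at this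
  have hsq : Tendsto (fun n => (b * (4 / 3 - (q n).1)) ^ 2) atTop (𝓝 1) := by
    refine hratio.congr' ((he.eventually_ne hl).mono fun n hn => ?_)
    rw [hq, fitchMap, mul_div_assoc, div_self hn, mul_one]
  have hfactor : Tendsto (fun n => b * (4 / 3 - (q n).1)) atTop (𝓝 1) := by
    have hnonneg n : 0 ≤ b * (4 / 3 - (q n).1) :=
      (factor_mem_Icc hb.le hw (hmem n).1 (hmem n).2.1).1
    simpa [Real.sqrt_sq (hnonneg _)] using hsq.sqrt
  have hw' : w = 4 / 3 - 1 / b := by field_simp; linarith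
  rw [hw']
  refine (tendsto_const_nhds.sub (hfactor.div_const b)).congr fun n => ?_
  field_simp
  ring

theorem tendsto_snd_of_fitchMap (hb : 3 / 4 ≤ b) (hb1 : b ≤ 1) (hw : b * (4 / 3 - w) = 1)
    {q : ℕ → ℝ × ℝ} (hq : ∀ n, q (n + 1) = fitchMap b (q n))
    (hmem : ∀ n, q n ∈ fitchRegion b w) :
    Tendsto (fun n => (q n).2) atTop (𝓝 (2 * w + 3 * w ^ 2)) := by
  obtain ⟨hw0, -⟩ := fixedPoint_mem_Icc hb hb1 hw
  have hlower n : 2 * w ≤ (q n).2 := by nlinarith [(hmem n).2.2.1]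
  have hanti : Antitone fun n => (q n).2 := by
    refine antitone_nat_of_succ_le fun n => ?_
    obtain ⟨hr0, hr1⟩ := factor_mem_Icc (by linarith) hw (hmem n).1 (hmem n).2.1
    rw [hq, fitchMap]
    exact mul_le_of_le_one_left (by linarith [hlower n]) (pow_le_one₀ hr0 hr1)
  have hbdd : BddBelow (range fun n => (q n).2) := ⟨2 * w, forall_mem_range.2 hlower⟩
  have he := tendsto_atTop_ciInf hanti hbdd
  set l := ⨅ n, (q n).2
  have hl : 2 * w ≤ l := le_ciInf hlower
  suffices l = 2 * w + 3 * w ^ 2 by rwa [← this]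
  by_cases hl0 : l = 0
  · have : w = 0 := by linarith
    simp [hl0, this]
  have hv := tendsto_fst_of_fitchMap (by linarith) hw hq hmem hl0 he
  have hv_succ : Tendsto (fun n => (q (n + 1)).1) atTop (𝓝 ((l - 3 * w ^ 2) / 2)) := by
    simp only [hq, fitchMap]
    exact (he.sub ((hv.pow 2).const_mul 3)).div_const 2
  linarith [tendsto_nhds_unique ((tendsto_add_atTop_iff_nat 1).2 hv) hv_succ]

end Fitch

/-- For 7/8 ≤ p ≤ 1, D_n² converges to (8p-7)(4p-3)/(2p-1)⁴. -/
theorem fitch_Dsq_tendsto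
    (p : ℝ) (C D : ℕ → ℝ)
    (hC0 : C 0 = 0) (hD0 : D 0 = 1)
    (hC : ∀ n, 2 * C (n + 1) =
        1 - 2 * C n + 3 * (C n) ^ 2 - (2 * p - 1) ^ 2 * (D n) ^ 2)
    (hD : ∀ n, D (n + 1) = (2 * p - 1) * (1 + C n) * D n)
    (hp1 : 7 / 8 ≤ p) (hp2 : p ≤ 1) :
    Tendsto (fun n => (D n) ^ 2) atTop
      (nhds ((8 * p - 7) * (4 * p - 3) / (2 * p - 1) ^ 4)) := by
  generalize hb_def : 2 * p - 1 = b at hC hD ⊢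
  obtain rfl : p = (b + 1) / 2 := by linarith
  have hb : 3 / 4 ≤ b := by linarith
  have hb1 : b ≤ 1 := by linarith
  have hb0 : b ≠ 0 := by positivity
  obtain ⟨w, hw⟩ : ∃ w, b * (4 / 3 - w) = 1 := ⟨4 / 3 - 1 / b, by field_simp; ring⟩
  set q : ℕ → ℝ × ℝ := fun n => (1 / 3 - C n, b ^ 2 * D n ^ 2)
  have hq n : q (n + 1) = fitchMap b (q n) := by
    simp only [q, fitchMap, Prod.mk.injEq, hD]
    exact ⟨by linear_combination (-1 / 2 : ℝ) * hC n, by ring⟩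
  have hmem n : q n ∈ fitchRegion b w := by
    induction n with
    | zero => simpa [q, hC0, hD0] using initial_mem_fitchRegion hb hb1 hw
    | succ n ih => exact hq n ▸ mapsTo_fitchMap hb hb1 hw ih
  have hlim : (8 * ((b + 1) / 2) - 7) * (4 * ((b + 1) / 2) - 3) / b ^ 4
      = (2 * w + 3 * w ^ 2) / b ^ 2 := by
    rw [div_eq_div_iff (by positivity) (by positivity)]
    linear_combination 3 * b ^ 2 * (b * w + 2 * b - 1) * hw
  rw [hlim]
  refine ((tendsto_snd_of_fitchMap hb hb1 hw hq hmem).div_const (b ^ 2)).congr fun n => ?_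
  simp [q, hb0]
end

section
/- Let p be real with 7/8 ≤ p ≤ 1. Then the reconstruction accuracy RA_F(T_n) = 1/2 + D_n(p)/2 of the Fitch method on the complete binary tree T_n of 2^n leaves converges, as n → ∞, to 1/2 + √((8p−7)(4p−3)) / (2(2p−1)²). -/
/-!
Write `t = 2p - 1 ∈ [3/4, 1]`. Since `D (n+1) = t (1 + C n) D n`, the sequence `D` decreases as
long as `C n ≤ 1/t - 1`. Imposed on `C n` and `C (n+1)` together, and with `0 ≤ D n ≤ 1 - C n`,
this bound propagates along the recursion (`FitchInvariant`), by a polynomial inequality with an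
explicit certificate. So `D` converges to some `L ≥ 0`. If `L > 0`, then
`t (1 + C n) = D (n+1) / D n → 1`, and passing to the limit in the recursion for `C` gives
`t⁴ L² = (2t - 1)(4t - 3) = (8p - 7)(4p - 3)`. The invariant also bounds `t⁴ (D n)²` below by this
same quantity, which settles the case `L = 0`.
-/

open Filter Topology

noncomputable def fitchNextC (t c d : ℝ) : ℝ := (1 - 2 * c + 3 * c ^ 2 - t ^ 2 * d ^ 2) / 2

def fitchNextD (t c d : ℝ) : ℝ := t * (1 + c) * d

/-- The last field bounds the next value of `C`: without it the other fields do not propagate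
(e.g. `t = 4/5`, `c = 1/4`, `d = 0`). -/
structure FitchInvariant (t c d : ℝ) : Prop where
  c_nonneg : 0 ≤ c
  d_nonneg : 0 ≤ d
  add_le_one : c + d ≤ 1
  mul_one_add_le : t * (1 + c) ≤ 1
  mul_one_add_nextC_le : t * (1 + fitchNextC t c d) ≤ 1

theorem fitchInvariant_zero_one {t : ℝ} (ht0 : 0 ≤ t) (ht1 : t ≤ 1) : FitchInvariant t 0 1 where
  c_nonneg := le_rfl
  d_nonneg := zero_le_one
  add_le_one := by norm_num
  mul_one_add_le := by linarith
  mul_one_add_nextC_le := by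
    unfold fitchNextC
    nlinarith [mul_nonneg (sq_nonneg (t - 1)) (by linarith : 0 ≤ t + 2)]

namespace FitchInvariant

variable {t c d : ℝ}

theorem mul_le_one_sub (ht1 : t ≤ 1) (h : FitchInvariant t c d) : t * d ≤ 1 - c := by
  nlinarith [h.d_nonneg, h.add_le_one]

theorem nextD_le (h : FitchInvariant t c d) : fitchNextD t c d ≤ d := by
  unfold fitchNextD
  nlinarith [h.d_nonneg, h.mul_one_add_le]

theorem mul_one_add_nextC_nextC_le (ht : 3 / 4 ≤ t) (ht1 : t < 1) (h : FitchInvariant t c d) :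
    t * (1 + fitchNextC t (fitchNextC t c d) (fitchNextD t c d)) ≤ 1 := by
  have ht0 : 0 < t := by linarith
  have hc := h.c_nonneg
  have htc : 0 ≤ t * c := by positivity
  have htd : t * d ≤ 1 - c := h.mul_le_one_sub ht1.le
  set x := 1 - t - t * c with hx_def
  have hx : 0 ≤ x := by linarith [h.mul_one_add_le]
  set e := t * ((1 - c) ^ 2 - t ^ 2 * d ^ 2) with he_def
  have he : 0 ≤ e := by
    have := pow_le_pow_left₀ (mul_nonneg ht0.le h.d_nonneg) htd 2
    nlinarith
  set f := 2 * (1 - t * (1 + fitchNextC t c d)) with hf_def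
  have hf : 0 ≤ f := by linarith [h.mul_one_add_nextC_le]
  set gap := 2 - 2 * t - 2 * t * c ^ 2 with hgap_def
  have hgap : 0 < gap := by nlinarith
  set G := 4 * (4 * t - 3) * (1 - t) + 6 * (1 - t) * x + 4 * (3 - 2 * t) * x * (t * c)
    + 3 * x ^ 3 with hG_def
  have hG : 0 ≤ G := by
    have : 0 ≤ 4 * (4 * t - 3) * (1 - t) := by nlinarith
    have : 0 ≤ 6 * (1 - t) * x := by nlinarith
    have : 0 ≤ 4 * (3 - 2 * t) * x * (t * c) := by
      have : 0 ≤ 4 * (3 - 2 * t) := by linarith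
      positivity
    positivity
  set F := (1 - t) ^ 2 * (t + 2) + t * c ^ 2 * (2 * (1 - t ^ 2) - c ^ 2 * (3 - t ^ 2)) with hF_def
  have hF : 0 ≤ F := by
    nlinarith [mul_self_le_mul_self htc (by linarith : t * c ≤ 1 - t), sq_nonneg c, sq_nonneg (t * c)]
  -- A Positivstellensatz certificate in the nonnegative quantities `x, e, f, G, F` and `gap > 0`.
  have cert : 2 * t ^ 2 * (1 - t * (1 + fitchNextC t (fitchNextC t c d) (fitchNextD t c d))) * gap
      = t * x * G * e + t ^ 2 * F * f + 3 * t / 4 * f * e * gap := by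
    simp only [hx_def, he_def, hf_def, hgap_def, hG_def, hF_def, fitchNextC, fitchNextD]
    ring
  have hK : 0 ≤ 2 * t ^ 2 * (1 - t * (1 + fitchNextC t (fitchNextC t c d) (fitchNextD t c d))) :=
    nonneg_of_mul_nonneg_left (cert ▸ by positivity) hgap
  nlinarith

theorem next (ht : 3 / 4 ≤ t) (ht1 : t ≤ 1) (h : FitchInvariant t c d) :
    FitchInvariant t (fitchNextC t c d) (fitchNextD t c d) where
  c_nonneg := by
    have := pow_le_pow_left₀ (by nlinarith [h.d_nonneg]) (h.mul_le_one_sub ht1) 2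
    unfold fitchNextC
    nlinarith
  d_nonneg := by
    have := h.c_nonneg
    have := h.d_nonneg
    unfold fitchNextD
    have : 0 ≤ t := by linarith
    positivity
  add_le_one := by
    have htd := h.mul_le_one_sub ht1
    have := h.c_nonneg
    unfold fitchNextC fitchNextD
    -- `2 - 2 (c' + d') = (1 - c - t d) (1 + 3 c - t d)`
    nlinarith [mul_nonneg (sub_nonneg.2 htd) (by linarith : 0 ≤ 1 + 3 * c - t * d)]
  mul_one_add_le := h.mul_one_add_nextC_le
  mul_one_add_nextC_le := by
    rcases ht1.lt_or_eq with ht1 | rfl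
    · exact h.mul_one_add_nextC_nextC_le ht ht1
    · have hc : c = 0 := by linarith [h.c_nonneg, h.mul_one_add_le]
      subst hc
      have hd : d = 1 := by
        have := h.mul_one_add_nextC_le
        unfold fitchNextC at this
        nlinarith [h.d_nonneg, h.add_le_one]
      subst hd
      norm_num [fitchNextC, fitchNextD]

theorem mul_le_pow_four_mul_sq (ht : 3 / 4 ≤ t) (h : FitchInvariant t c d) :
    (2 * t - 1) * (4 * t - 3) ≤ t ^ 4 * d ^ 2 := by
  have hx : 0 ≤ 1 - t - t * c := by linarith [h.mul_one_add_le]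
  have hy : 0 ≤ 5 * t - 3 - 3 * (t * c) := by linarith
  have := mul_le_mul_of_nonneg_left h.mul_one_add_nextC_le (by linarith : (0 : ℝ) ≤ t)
  unfold fitchNextC at this
  nlinarith [mul_nonneg hx hy]

end FitchInvariant

theorem tendsto_one_of_succ_eq_mul {x a : ℕ → ℝ} {L : ℝ} (hL : L ≠ 0)
    (hx : Tendsto x atTop (𝓝 L)) (h : ∀ n, x (n + 1) = a n * x n) : Tendsto a atTop (𝓝 1) := by
  have hratio : Tendsto (fun n => x (n + 1) / x n) atTop (𝓝 (L / L)) :=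
    (hx.comp (tendsto_add_atTop_nat 1)).div hx hL
  rw [div_self hL] at hratio
  refine hratio.congr' ?_
  filter_upwards [hx.eventually_ne hL] with n hn
  rw [h n, mul_div_cancel_right₀ _ hn]

theorem pow_four_mul_sq_limit_eq_of_fitchInvariant {t L : ℝ} {C D : ℕ → ℝ} (ht : 3 / 4 ≤ t)
    (hC : ∀ n, C (n + 1) = fitchNextC t (C n) (D n))
    (hD : ∀ n, D (n + 1) = fitchNextD t (C n) (D n))
    (hinv : ∀ n, FitchInvariant t (C n) (D n)) (hL : Tendsto D atTop (𝓝 L)) :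
    t ^ 4 * L ^ 2 = (2 * t - 1) * (4 * t - 3) := by
  have hle : (2 * t - 1) * (4 * t - 3) ≤ t ^ 4 * L ^ 2 :=
    ge_of_tendsto ((hL.pow 2).const_mul _)
      (Eventually.of_forall fun n => (hinv n).mul_le_pow_four_mul_sq ht)
  rcases eq_or_ne L 0 with rfl | hL0
  · nlinarith
  have ht0 : t ≠ 0 := by positivity
  have hCt : Tendsto (fun n => t * (1 + C n)) atTop (𝓝 1) :=
    tendsto_one_of_succ_eq_mul hL0 hL hD
  have hClim : Tendsto C atTop (𝓝 (1 / t - 1)) :=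
    ((hCt.div_const t).sub_const 1).congr fun n => by field_simp; ring
  have hnext : Tendsto (fun n => C (n + 1)) atTop (𝓝 (fitchNextC t (1 / t - 1) L)) := by
    have hcont : Continuous fun y : ℝ × ℝ => fitchNextC t y.1 y.2 := by
      unfold fitchNextC
      fun_prop
    simp_rw [hC]
    exact (hcont.tendsto _).comp (hClim.prodMk_nhds hL)
  have hfix := tendsto_nhds_unique (hClim.comp (tendsto_add_atTop_nat 1)) hnext
  unfold fitchNextC at hfix
  field_simp at hfix
  linear_combination hfix

/-- For 7/8 ≤ p ≤ 1, the Fitch reconstruction accuracy RA_F(T_n) = 1/2 + D_n/2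
converges to 1/2 + √((8p-7)(4p-3)) / (2(2p-1)²). -/
theorem fitch_accuracy_tendsto
    (p : ℝ) (C D : ℕ → ℝ)
    (hC0 : C 0 = 0) (hD0 : D 0 = 1)
    (hC : ∀ n, 2 * C (n + 1) =
        1 - 2 * C n + 3 * (C n) ^ 2 - (2 * p - 1) ^ 2 * (D n) ^ 2)
    (hD : ∀ n, D (n + 1) = (2 * p - 1) * (1 + C n) * D n)
    (hp1 : 7 / 8 ≤ p) (hp2 : p ≤ 1) :
    Tendsto (fun n => 1 / 2 + D n / 2) atTop
      (nhds (1 / 2 + Real.sqrt ((8 * p - 7) * (4 * p - 3)) / (2 * (2 * p - 1) ^ 2))) := by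
  set t := 2 * p - 1 with ht_def
  have ht : 3 / 4 ≤ t := by linarith
  have ht1 : t ≤ 1 := by linarith
  have hC' : ∀ n, C (n + 1) = fitchNextC t (C n) (D n) := fun n => by
    rw [fitchNextC]; linarith [hC n]
  have hinv : ∀ n, FitchInvariant t (C n) (D n) := by
    intro n
    induction n with
    | zero => rw [hC0, hD0]; exact fitchInvariant_zero_one (by linarith) ht1
    | succ n ih => rw [hC' n, hD n]; exact ih.next ht ht1
  have hanti : Antitone D :=
    antitone_nat_of_succ_le fun n => (hD n).trans_le (hinv n).nextD_le
  have hL := tendsto_atTop_ciInf hanti ⟨0, Set.forall_mem_range.2 fun n => (hinv n).d_nonneg⟩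
  set L := ⨅ n, D n
  have hL0 : 0 ≤ L := ge_of_tendsto' hL fun n => (hinv n).d_nonneg
  have hsqrt : Real.sqrt ((8 * p - 7) * (4 * p - 3)) = t ^ 2 * L := by
    have hsq := pow_four_mul_sq_limit_eq_of_fitchInvariant ht hC' hD hinv hL
    rw [show (8 * p - 7) * (4 * p - 3) = (t ^ 2 * L) ^ 2 by rw [ht_def] at hsq ⊢; linarith]
    exact Real.sqrt_sq (by positivity)
  rw [hsqrt, show t ^ 2 * L / (2 * t ^ 2) = L / 2 by field_simp]
  exact (hL.div_const 2).const_add _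
end

section
/- Let p be real with 0 < p < 1/8. Then the sequence D_n(p) (equivalently, the reconstruction accuracy RA_F(T_n) = 1/2 + D_n(p)/2) does not converge as n → ∞; i.e., there is no real L such that D_n(p) → L. -/
/-!
Write `x = 2p - 1`, so `-1 < x < -3/4`. The region `0 ≤ C, C + |D| ≤ 1` is invariant under the
recursion, hence `1 + C_n > 0`, the `D_n` never vanish and alternate in sign; a limit of `D`
must therefore be `0`. But if `D_n → 0`, the recursion for `C` gives
`C_{n+1} ≥ 1/3 - D_n²/2 → 1/3`, so eventually
`|D_{n+2}| = |x| (1 + C_{n+1}) |D_{n+1}| ≥ |D_{n+1}|` because `|x| · 4/3 > 1`, and a sequence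
of nonzero reals whose absolute values eventually grow cannot tend to `0`.
-/

open Filter

theorem eq_zero_of_tendsto_of_mul_succ_nonpos {u : ℕ → ℝ} {L : ℝ}
    (hsign : ∀ n, u (n + 1) * u n ≤ 0) (hu : Tendsto u atTop (nhds L)) : L = 0 := by
  have hprod : Tendsto (fun n => u (n + 1) * u n) atTop (nhds (L * L)) :=
    (hu.comp (tendsto_add_atTop_nat 1)).mul hu
  have hLL : L * L ≤ 0 := le_of_tendsto' hprod hsign
  nlinarith [mul_self_nonneg L]

theorem not_tendsto_zero_of_eventually_abs_le_abs_succ {u : ℕ → ℝ} (hne : ∀ n, u n ≠ 0)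
    (hgrow : ∀ᶠ n in atTop, |u n| ≤ |u (n + 1)|) : ¬ Tendsto u atTop (nhds 0) := by
  intro hu
  obtain ⟨N, hN⟩ := eventually_atTop.1 hgrow
  have hmono : Monotone fun k => |u (k + N)| :=
    monotone_nat_of_le_succ fun k => by simpa [Nat.add_right_comm] using hN (k + N) (by omega)
  have htail : Tendsto (fun k => |u (k + N)|) atTop (nhds 0) := by
    simpa using (hu.comp (tendsto_add_atTop_nat N)).abs
  have hle : |u N| ≤ 0 := by simpa using hmono.ge_of_tendsto htail 0
  exact hne N (abs_nonpos_iff.1 hle)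

theorem fitch_step_mem_region {x c d c' : ℝ} (hx : |x| ≤ 1) (hc : 0 ≤ c) (hcd : c + |d| ≤ 1)
    (hc' : 2 * c' = 1 - 2 * c + 3 * c ^ 2 - x ^ 2 * d ^ 2) :
    0 ≤ c' ∧ c' + |x * (1 + c) * d| ≤ 1 := by
  have hd : |d| ≤ 1 - c := by linarith
  have hxd : |x| * |d| ≤ |d| := mul_le_of_le_one_left (abs_nonneg d) hx
  have hsq : x ^ 2 * d ^ 2 = (|x| * |d|) ^ 2 := by rw [mul_pow, sq_abs, sq_abs]
  have habs : |x * (1 + c) * d| = (1 + c) * (|x| * |d|) := by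
    rw [abs_mul, abs_mul, abs_of_pos (by linarith : 0 < 1 + c)]; ring
  rw [habs]
  have ht : (|x| * |d|) ^ 2 ≤ (1 - c) ^ 2 :=
    pow_le_pow_left₀ (by positivity) (hxd.trans hd) 2
  constructor
  · nlinarith
  · -- `1 - c` and `1 + 3c` are the roots of `(1 - c)(1 + 3c) + t² - 2(1 + c)t` in `t`
    have hroots : 0 ≤ (1 - c - |d|) * (1 + 3 * c - |d|) :=
      mul_nonneg (by linarith) (by linarith)
    nlinarith [mul_nonneg (abs_nonneg x) (abs_nonneg d)]

section Recursion

variable {x : ℝ} {C D : ℕ → ℝ}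

theorem mem_region_of_recursion (hx : |x| ≤ 1) (h0 : 0 ≤ C 0 ∧ C 0 + |D 0| ≤ 1)
    (hC : ∀ n, 2 * C (n + 1) = 1 - 2 * C n + 3 * (C n) ^ 2 - x ^ 2 * (D n) ^ 2)
    (hD : ∀ n, D (n + 1) = x * (1 + C n) * D n) (n : ℕ) : 0 ≤ C n ∧ C n + |D n| ≤ 1 := by
  induction n with
  | zero => exact h0
  | succ n ih => rw [hD n]; exact fitch_step_mem_region hx ih.1 ih.2 (hC n)

theorem D_ne_zero_of_recursion (hx : x ≠ 0) (hD0 : D 0 ≠ 0) (hCnonneg : ∀ n, 0 ≤ C n)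
    (hD : ∀ n, D (n + 1) = x * (1 + C n) * D n) (n : ℕ) : D n ≠ 0 := by
  induction n with
  | zero => exact hD0
  | succ n ih =>
    rw [hD n]
    exact mul_ne_zero (mul_ne_zero hx (by linarith [hCnonneg n])) ih

theorem D_succ_mul_D_nonpos_of_recursion (hx : x ≤ 0) (hCnonneg : ∀ n, 0 ≤ C n)
    (hD : ∀ n, D (n + 1) = x * (1 + C n) * D n) (n : ℕ) : D (n + 1) * D n ≤ 0 := by
  have hsplit : D (n + 1) * D n = x * ((1 + C n) * D n ^ 2) := by rw [hD n]; ring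
  rw [hsplit]
  exact mul_nonpos_of_nonpos_of_nonneg hx (mul_nonneg (by linarith [hCnonneg n]) (sq_nonneg _))

theorem eventually_abs_D_le_abs_D_succ (hx1 : |x| ≤ 1) (hx34 : 3 / 4 < |x|)
    (hCnonneg : ∀ n, 0 ≤ C n)
    (hC : ∀ n, 2 * C (n + 1) = 1 - 2 * C n + 3 * (C n) ^ 2 - x ^ 2 * (D n) ^ 2)
    (hD : ∀ n, D (n + 1) = x * (1 + C n) * D n) (hD0 : Tendsto D atTop (nhds 0)) :
    ∀ᶠ n in atTop, |D n| ≤ |D (n + 1)| := by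
  have hxpos : 0 < |x| := by linarith
  have hC_lower : ∀ n, 1 / 3 - D n ^ 2 / 2 ≤ C (n + 1) := fun n => by
    have hx2 : x ^ 2 ≤ 1 := by nlinarith [sq_abs x]
    nlinarith [hC n, sq_nonneg (3 * C n - 1), sq_nonneg (D n)]
  have hlim : Tendsto (fun n => 1 / 3 - D n ^ 2 / 2) atTop (nhds (1 / 3)) := by
    simpa using (hD0.pow 2).div_const 2 |>.const_sub (1 / 3 : ℝ)
  have hthreshold : 1 / |x| - 1 < 1 / 3 := by
    rw [div_sub_one hxpos.ne', div_lt_div_iff₀ hxpos (by norm_num)]; linarith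
  obtain ⟨N, hgap⟩ := eventually_atTop.1 (hlim.eventually_const_lt hthreshold)
  refine eventually_atTop.2 ⟨N + 1, fun n hn => ?_⟩
  obtain ⟨m, rfl⟩ : ∃ m, n = m + 1 := ⟨n - 1, by omega⟩
  have hfactor : 1 ≤ |x| * (1 + C (m + 1)) := by
    have := (div_lt_iff₀' hxpos).1
      (by linarith [hC_lower m, hgap m (by omega)] : 1 / |x| < 1 + C (m + 1))
    linarith
  have hpos : 0 ≤ 1 + C (m + 1) := by linarith [hCnonneg (m + 1)]
  rw [hD (m + 1), abs_mul, abs_mul, abs_of_nonneg hpos]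
  exact le_mul_of_one_le_left (abs_nonneg _) hfactor

end Recursion

/-- For 0 < p < 1/8, the sequence D_n (and hence the accuracy 1/2 + D_n/2)
diverges: it has no limit. -/
theorem fitch_D_diverges
    (p : ℝ) (C D : ℕ → ℝ)
    (hC0 : C 0 = 0) (hD0 : D 0 = 1)
    (hC : ∀ n, 2 * C (n + 1) =
        1 - 2 * C n + 3 * (C n) ^ 2 - (2 * p - 1) ^ 2 * (D n) ^ 2)
    (hD : ∀ n, D (n + 1) = (2 * p - 1) * (1 + C n) * D n)
    (hp1 : 0 < p) (hp2 : p < 1 / 8) :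
    ¬ ∃ L : ℝ, Tendsto D atTop (nhds L) := by
  rintro ⟨L, hL⟩
  have hxabs : |2 * p - 1| = 1 - 2 * p := by rw [abs_of_neg (by linarith)]; ring
  have hx1 : |2 * p - 1| ≤ 1 := by linarith
  have hCnonneg n := (mem_region_of_recursion hx1 (by simp [hC0, hD0]) hC hD n).1
  have hDne := D_ne_zero_of_recursion (by linarith) (by simp [hD0]) hCnonneg hD
  have hL0 : L = 0 := eq_zero_of_tendsto_of_mul_succ_nonpos
    (D_succ_mul_D_nonpos_of_recursion (by linarith) hCnonneg hD) hL
  subst hL0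
  exact not_tendsto_zero_of_eventually_abs_le_abs_succ hDne
    (eventually_abs_D_le_abs_D_succ hx1 (by linarith) hCnonneg hC hD hL) hL
end

section
/- Fix λ ≥ 0. Let T be a branch-length binary tree with all branch lengths nonnegative that is ultrametric with depth d (i.e., Depth T d holds). Then D(T) ≥ exp(−2λd). -/
/-- A branch-length binary tree: internal nodes carry the lengths of the
two branches to the subtrees. -/
inductive BLTree : Type
  | leaf : BLTree
  | node : ℝ → ℝ → BLTree → BLTree → BLTree

/-- The pair (α(T), β(T)) of Fitch probabilities, with conservation
probability p(t) = (1 + exp(-2λt))/2 on a branch of length t. -/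
noncomputable def fitchAB (lam : ℝ) : BLTree → ℝ × ℝ
  | .leaf => (1, 0)
  | .node tX tY X Y =>
      let aX := (fitchAB lam X).1; let bX := (fitchAB lam X).2
      let aY := (fitchAB lam Y).1; let bY := (fitchAB lam Y).2
      let pX := (1 + Real.exp (-2 * lam * tX)) / 2
      let pY := (1 + Real.exp (-2 * lam * tY)) / 2
      let qX := 1 - pX; let qY := 1 - pY
      ((pX * aX + qX * bX) * (pY * aY + qY * bY)
        + (pX * aX + qX * bX) * (1 - aY - bY)
        + (1 - aX - bX) * (pY * aY + qY * bY),
       (qX * aX + pX * bX) * (qY * aY + pY * bY)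
        + (qX * aX + pX * bX) * (1 - aY - bY)
        + (1 - aX - bX) * (qY * aY + pY * bY))

/-- D(T) = α(T) - β(T). -/
noncomputable def fitchD (lam : ℝ) (T : BLTree) : ℝ := (fitchAB lam T).1 - (fitchAB lam T).2

/-- All branch lengths are nonnegative. -/
def nonnegLengths : BLTree → Prop
  | .leaf => True
  | .node tX tY X Y => 0 ≤ tX ∧ 0 ≤ tY ∧ nonnegLengths X ∧ nonnegLengths Y

/-- `Depth T d`: the tree is ultrametric with every root-to-leaf path of total length d. -/
def Depth : BLTree → ℝ → Prop
  | .leaf, d => d = 0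
  | .node tX tY X Y, d => Depth X (d - tX) ∧ Depth Y (d - tY)

/-! The recursion for (α, β) is a composition of two operations on the vector
`u = (P(Fitch set = {root state}), P(Fitch set = {other state}))`: a symmetric
mutation along each branch, which multiplies `D = α - β` by `exp(-2λt)` and keeps
`C = 1 - α - β`, and Fitch's merge at the root, for which
`D = (D_X (1 + C_Y) + D_Y (1 + C_X)) / 2` with `C_X, C_Y ≥ 0`. If both mutated
children have `D ≥ exp(-2λd)`, so has the root; along an ultrametric tree the
factors `exp(-2λt)` of the branches multiply up to `exp(-2λd)`. -/

namespace Fitch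

def branch (p : ℝ) (u : ℝ × ℝ) : ℝ × ℝ :=
  (p * u.1 + (1 - p) * u.2, (1 - p) * u.1 + p * u.2)

-- Fitch's rule: the intersection of the children's sets if nonempty, else their union.
def merge (u v : ℝ × ℝ) : ℝ × ℝ :=
  (u.1 * v.1 + u.1 * (1 - v.1 - v.2) + (1 - u.1 - u.2) * v.1,
   u.2 * v.2 + u.2 * (1 - v.1 - v.2) + (1 - u.1 - u.2) * v.2)

def diff (u : ℝ × ℝ) : ℝ := u.1 - u.2

def ambig (u : ℝ × ℝ) : ℝ := 1 - u.1 - u.2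

def IsSubProb (u : ℝ × ℝ) : Prop := 0 ≤ u.1 ∧ 0 ≤ u.2 ∧ 0 ≤ ambig u

variable {p E : ℝ} {u v : ℝ × ℝ}

lemma diff_branch : diff (branch p u) = (2 * p - 1) * diff u := by
  simp only [diff, branch]; ring

lemma ambig_branch : ambig (branch p u) = ambig u := by
  simp only [ambig, branch]; ring

lemma diff_merge :
    diff (merge u v) = (diff u * (1 + ambig v) + diff v * (1 + ambig u)) / 2 := by
  simp only [diff, ambig, merge]; ring

lemma ambig_merge : ambig (merge u v) = u.1 * v.2 + u.2 * v.1 + ambig u * ambig v := by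
  simp only [ambig, merge]; ring

lemma IsSubProb.branch (hp₀ : 0 ≤ p) (hp₁ : p ≤ 1) (hu : IsSubProb u) :
    IsSubProb (branch p u) := by
  obtain ⟨h₁, h₂, hc⟩ := hu
  have : 0 ≤ 1 - p := sub_nonneg.mpr hp₁
  refine ⟨?_, ?_, by rwa [ambig_branch]⟩ <;>
  · simp only [Fitch.branch]; positivity

lemma IsSubProb.merge (hu : IsSubProb u) (hv : IsSubProb v) : IsSubProb (merge u v) := by
  obtain ⟨hu₁, hu₂, huc⟩ := hu
  obtain ⟨hv₁, hv₂, hvc⟩ := hv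
  refine ⟨?_, ?_, ambig_merge ▸ by positivity⟩ <;>
  · simp only [Fitch.merge]; unfold ambig at huc hvc; positivity

lemma le_diff_merge (hE : 0 ≤ E) (hu : IsSubProb u) (hv : IsSubProb v)
    (hEu : E ≤ diff u) (hEv : E ≤ diff v) : E ≤ diff (merge u v) := by
  have hcu := hu.2.2
  have hcv := hv.2.2
  calc E ≤ (E * (1 + ambig v) + E * (1 + ambig u)) / 2 := by nlinarith
    _ ≤ (diff u * (1 + ambig v) + diff v * (1 + ambig u)) / 2 := by gcongr
    _ = diff (merge u v) := diff_merge.symm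

end Fitch

open Fitch

noncomputable def jcProb (lam t : ℝ) : ℝ := (1 + Real.exp (-2 * lam * t)) / 2

lemma two_mul_jcProb_sub_one (lam t : ℝ) : 2 * jcProb lam t - 1 = Real.exp (-2 * lam * t) := by
  unfold jcProb; ring

lemma jcProb_nonneg (lam t : ℝ) : 0 ≤ jcProb lam t := by
  unfold jcProb; positivity

lemma jcProb_le_one {lam t : ℝ} (h : 0 ≤ lam * t) : jcProb lam t ≤ 1 := by
  have : Real.exp (-2 * lam * t) ≤ 1 := Real.exp_le_one_iff.mpr (by linarith)
  unfold jcProb; linarith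

lemma Fitch.IsSubProb.branch_jcProb {lam t : ℝ} {u : ℝ × ℝ} (hlam : 0 ≤ lam) (ht : 0 ≤ t)
    (hu : IsSubProb u) : IsSubProb (Fitch.branch (jcProb lam t) u) :=
  hu.branch (jcProb_nonneg lam t) (jcProb_le_one (mul_nonneg hlam ht))

lemma fitchAB_node (lam tX tY : ℝ) (X Y : BLTree) :
    fitchAB lam (.node tX tY X Y) =
      merge (branch (jcProb lam tX) (fitchAB lam X)) (branch (jcProb lam tY) (fitchAB lam Y)) := by
  simp only [fitchAB, merge, branch, jcProb]
  ext <;> ring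

lemma fitchD_eq_diff (lam : ℝ) (T : BLTree) : fitchD lam T = diff (fitchAB lam T) := rfl

lemma isSubProb_fitchAB {lam : ℝ} (hlam : 0 ≤ lam) :
    ∀ T : BLTree, nonnegLengths T → IsSubProb (fitchAB lam T)
  | .leaf, _ => by simp [IsSubProb, ambig, fitchAB]
  | .node tX tY X Y, ⟨htX, htY, hX, hY⟩ => by
    rw [fitchAB_node]
    exact ((isSubProb_fitchAB hlam X hX).branch_jcProb hlam htX).merge
      ((isSubProb_fitchAB hlam Y hY).branch_jcProb hlam htY)

lemma exp_le_diff_branch {lam t d : ℝ} {X : BLTree}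
    (hX : Real.exp (-2 * lam * (d - t)) ≤ fitchD lam X) :
    Real.exp (-2 * lam * d) ≤ diff (branch (jcProb lam t) (fitchAB lam X)) := by
  rw [diff_branch, two_mul_jcProb_sub_one, ← fitchD_eq_diff]
  calc Real.exp (-2 * lam * d) = Real.exp (-2 * lam * t) * Real.exp (-2 * lam * (d - t)) := by
        rw [← Real.exp_add]; ring_nf
    _ ≤ Real.exp (-2 * lam * t) * fitchD lam X := by gcongr

/-- In an ultrametric tree of depth d with nonnegative branch lengths,
D(T) ≥ exp(-2λd). -/
theorem fitchD_ge_exp (lam : ℝ) (hlam : 0 ≤ lam)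
    (T : BLTree) (hT : nonnegLengths T) (d : ℝ) (hd : Depth T d) :
    fitchD lam T ≥ Real.exp (-2 * lam * d) := by
  induction T generalizing d with
  | leaf =>
    obtain rfl : d = 0 := hd
    simp [fitchD, fitchAB]
  | node tX tY X Y ihX ihY =>
    obtain ⟨htX, htY, hX, hY⟩ := hT
    obtain ⟨hdX, hdY⟩ := hd
    rw [fitchD_eq_diff, fitchAB_node]
    exact le_diff_merge (Real.exp_pos _).le
      ((isSubProb_fitchAB hlam X hX).branch_jcProb hlam htX)
      ((isSubProb_fitchAB hlam Y hY).branch_jcProb hlam htY)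
      (exp_le_diff_branch (ihX hX _ hdX)) (exp_le_diff_branch (ihY hY _ hdY))
end

section
/- Fix λ ≥ 0. Let T = node t_x t_y X Y be a branch-length binary tree with all branch lengths nonnegative that is ultrametric with depth d (i.e., Depth T d holds), and suppose the child subtree X is itself an internal node (X = node t_u t_v U V). Then D(T) ≥ exp(−2λd) · (1 + (1/4)(1 − exp(−4λ(d − t_x)))). -/
/-!
In the coordinates `C = 1 - α - β` and `D = α - β`, a branch of length `t` leaves `C` unchanged
and multiplies `D` by `exp (-2λt)`, and a node combines the children by two explicit quadratic
formulas. By induction, a tree of depth `h` satisfies `0 ≤ C`, `exp (-2λh) ≤ D ≤ 1 - C`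
(the last is `β ≥ 0`). Since the node formula is increasing in the scaled `D` of each child,
these bounds on the children of an internal node `X` of depth `h` give the sharper
`(3e - e³)/2 ≤ D(X) + e·C(X)` with `e = exp (-2λh)`. Feeding this into the formula for `D(T)`,
the `C(X)` terms cancel against the contribution of `Y`.
-/

open Real

noncomputable def fitchC (lam : ℝ) (T : BLTree) : ℝ := 1 - (fitchAB lam T).1 - (fitchAB lam T).2

/-- `D` at a node from `x = C(X)`, `a = exp (-2λ t_X) D(X)` and likewise `y`, `b` for `Y`. -/
noncomputable def nodeD (x a y b : ℝ) : ℝ := (a * (1 + y) + b * (1 + x)) / 2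

/-- `C` at a node, in the same variables as `nodeD`. -/
noncomputable def nodeC (x a y b : ℝ) : ℝ := ((1 - x) * (1 - y) + 2 * x * y - a * b) / 2

section NodeFormulas

variable (lam tX tY : ℝ) (X Y : BLTree)

theorem fitchD_node : fitchD lam (.node tX tY X Y) =
    nodeD (fitchC lam X) (exp (-2 * lam * tX) * fitchD lam X)
      (fitchC lam Y) (exp (-2 * lam * tY) * fitchD lam Y) := by
  simp only [fitchD, fitchC, fitchAB, nodeD]
  ring

theorem fitchC_node : fitchC lam (.node tX tY X Y) =
    nodeC (fitchC lam X) (exp (-2 * lam * tX) * fitchD lam X)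
      (fitchC lam Y) (exp (-2 * lam * tY) * fitchD lam Y) := by
  simp only [fitchD, fitchC, fitchAB, nodeC]
  ring

end NodeFormulas

theorem exp_neg_two_mul_eq_mul (lam t h : ℝ) :
    exp (-2 * lam * h) = exp (-2 * lam * t) * exp (-2 * lam * (h - t)) := by
  rw [← exp_add]
  ring_nf

theorem exp_neg_two_mul_le_one {lam t : ℝ} (hlam : 0 ≤ lam) (ht : 0 ≤ t) :
    exp (-2 * lam * t) ≤ 1 :=
  exp_le_one_iff.mpr (by nlinarith)

structure FitchBounds_s18 (e c D : ℝ) : Prop where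
  compl_nonneg : 0 ≤ c
  le_diff : e ≤ D
  diff_le : D ≤ 1 - c

namespace FitchBounds_s18

variable {e x a y b : ℝ}

theorem branch {E : ℝ} (h : FitchBounds_s18 e x a) (he : 0 ≤ e) (hE : 0 ≤ E) (hE1 : E ≤ 1) :
    FitchBounds_s18 (E * e) x (E * a) where
  compl_nonneg := h.compl_nonneg
  le_diff := mul_le_mul_of_nonneg_left h.le_diff hE
  diff_le := (mul_le_of_le_one_left (he.trans h.le_diff) hE1).trans h.diff_le

theorem node (he : 0 ≤ e) (hX : FitchBounds_s18 e x a) (hY : FitchBounds_s18 e y b) :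
    FitchBounds_s18 e (nodeC x a y b) (nodeD x a y b) := by
  obtain ⟨hx, hxa, hax⟩ := hX
  obtain ⟨hy, hyb, hby⟩ := hY
  have ha : 0 ≤ a := he.trans hxa
  have hb : 0 ≤ b := he.trans hyb
  refine ⟨?_, ?_, ?_⟩
  · have : a * b ≤ (1 - x) * (1 - y) := mul_le_mul hax hby hb (by linarith)
    unfold nodeC
    nlinarith [mul_nonneg hx hy]
  · unfold nodeD
    nlinarith [mul_le_mul_of_nonneg_left hxa (by linarith : (0 : ℝ) ≤ 1 + y),
      mul_le_mul_of_nonneg_left hyb (by linarith : (0 : ℝ) ≤ 1 + x)]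
  · -- `1 - C - D` at the node is twice its `β`, a sum of products of nonnegative factors.
    have hβ : 1 - nodeC x a y b - nodeD x a y b =
        ((1 - x - a) * (1 - y - b) + 2 * (1 - x - a) * y + 2 * x * (1 - y - b)) / 2 := by
      unfold nodeC nodeD
      ring
    have hxa' : 0 ≤ 1 - x - a := by linarith
    have hyb' : 0 ≤ 1 - y - b := by linarith
    nlinarith [mul_nonneg hxa' hyb', mul_nonneg hxa' hy, mul_nonneg hx hyb']

/-- The node formula is increasing in `a` and `b`, so its minimum over `a, b ≥ e` is at `a = b = e`. -/
theorem node_add_mul_compl (he : 0 ≤ e) (hX : FitchBounds_s18 e x a) (hY : FitchBounds_s18 e y b) :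
    (3 * e - e ^ 3) / 2 ≤ nodeD x a y b + e * nodeC x a y b := by
  obtain ⟨hx, hxa, hax⟩ := hX
  obtain ⟨hy, hyb, hby⟩ := hY
  have he1 : e ≤ 1 := by linarith
  have hb1 : e * b ≤ 1 := by nlinarith
  have hincr : nodeD x a y b + e * nodeC x a y b =
      nodeD x e y e + e * nodeC x e y e
        + ((a - e) * (1 + y - e * b) + (b - e) * (1 + x - e * e)) / 2 := by
    unfold nodeC nodeD
    ring
  have hcorner : nodeD x e y e + e * nodeC x e y e = (3 * e - e ^ 3) / 2 + 3 * e * x * y / 2 := by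
    unfold nodeC nodeD
    ring
  rw [hincr, hcorner]
  have : 0 ≤ (a - e) * (1 + y - e * b) := mul_nonneg (by linarith) (by linarith)
  have : 0 ≤ (b - e) * (1 + x - e * e) := mul_nonneg (by linarith) (by nlinarith)
  have : 0 ≤ e * x * y := by positivity
  linarith

end FitchBounds_s18

theorem fitchBounds_of_depth {lam : ℝ} (hlam : 0 ≤ lam) {T : BLTree} {h : ℝ}
    (hT : nonnegLengths T) (hd : Depth T h) :
    FitchBounds_s18 (exp (-2 * lam * h)) (fitchC lam T) (fitchD lam T) := by
  induction T generalizing h with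
  | leaf =>
    obtain rfl : h = 0 := hd
    exact ⟨by simp [fitchC, fitchAB], by simp [fitchD, fitchAB], by simp [fitchC, fitchD, fitchAB]⟩
  | node tX tY X Y ihX ihY =>
    obtain ⟨htX, htY, hnX, hnY⟩ := hT
    obtain ⟨hdX, hdY⟩ := hd
    rw [fitchC_node, fitchD_node]
    refine FitchBounds_s18.node (exp_pos _).le ?_ ?_
    · rw [exp_neg_two_mul_eq_mul lam tX h]
      exact (ihX hnX hdX).branch (exp_pos _).le (exp_pos _).le (exp_neg_two_mul_le_one hlam htX)
    · rw [exp_neg_two_mul_eq_mul lam tY h]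
      exact (ihY hnY hdY).branch (exp_pos _).le (exp_pos _).le (exp_neg_two_mul_le_one hlam htY)

theorem le_fitchD_add_mul_fitchC_node {lam : ℝ} (hlam : 0 ≤ lam) {tU tV h : ℝ} {U V : BLTree}
    (hT : nonnegLengths (.node tU tV U V)) (hd : Depth (.node tU tV U V) h) :
    (3 * exp (-2 * lam * h) - exp (-2 * lam * h) ^ 3) / 2 ≤
      fitchD lam (.node tU tV U V) + exp (-2 * lam * h) * fitchC lam (.node tU tV U V) := by
  obtain ⟨htU, htV, hnU, hnV⟩ := hT
  obtain ⟨hdU, hdV⟩ := hd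
  rw [fitchC_node, fitchD_node]
  refine FitchBounds_s18.node_add_mul_compl (exp_pos _).le ?_ ?_
  · rw [exp_neg_two_mul_eq_mul lam tU h]
    exact (fitchBounds_of_depth hlam hnU hdU).branch (exp_pos _).le (exp_pos _).le
      (exp_neg_two_mul_le_one hlam htU)
  · rw [exp_neg_two_mul_eq_mul lam tV h]
    exact (fitchBounds_of_depth hlam hnV hdV).branch (exp_pos _).le (exp_pos _).le
      (exp_neg_two_mul_le_one hlam htV)

theorem le_nodeD_of_add_mul_le {E e x D y b : ℝ} (hE : 0 ≤ E) (hx : 0 ≤ x) (hy : 0 ≤ y)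
    (hD : 0 ≤ D) (hX : (3 * e - e ^ 3) / 2 ≤ D + e * x) (hb : E * e ≤ b) :
    E * e * (1 + 1 / 4 * (1 - e ^ 2)) ≤ nodeD x (E * D) y b := by
  have hEX : E * ((3 * e - e ^ 3) / 2) ≤ E * (D + e * x) := mul_le_mul_of_nonneg_left hX hE
  unfold nodeD
  nlinarith [mul_nonneg (mul_nonneg hE hD) hy, mul_le_mul_of_nonneg_right hb hx]

/-- In an ultrametric tree T = node t_x t_y X Y of depth d with nonnegative
branch lengths, if the child X is an internal node of depth d - t_x, then
D(T) ≥ exp(-2λd)·(1 + (1/4)(1 - exp(-4λ(d - t_x)))). -/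
theorem fitchD_ge_exp_internal_child (lam : ℝ) (hlam : 0 ≤ lam)
    (tx ty tu tv : ℝ) (U V Y : BLTree)
    (hT : nonnegLengths (BLTree.node tx ty (BLTree.node tu tv U V) Y))
    (d : ℝ) (hd : Depth (BLTree.node tx ty (BLTree.node tu tv U V) Y) d) :
    fitchD lam (BLTree.node tx ty (BLTree.node tu tv U V) Y) ≥
      Real.exp (-2 * lam * d)
        * (1 + (1 / 4) * (1 - Real.exp (-4 * lam * (d - tx)))) := by
  obtain ⟨htx, hty, hnX, hnY⟩ := hT
  obtain ⟨hdX, hdY⟩ := hd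
  have hX := fitchBounds_of_depth hlam hnX hdX
  have hY := (fitchBounds_of_depth hlam hnY hdY).branch (exp_pos _).le (exp_pos _).le
    (exp_neg_two_mul_le_one hlam hty)
  have hsq : exp (-4 * lam * (d - tx)) = exp (-2 * lam * (d - tx)) ^ 2 := by
    rw [← exp_nat_mul]
    ring_nf
  rw [← exp_neg_two_mul_eq_mul lam ty d] at hY
  rw [ge_iff_le, fitchD_node, hsq, exp_neg_two_mul_eq_mul lam tx d]
  refine le_nodeD_of_add_mul_le (exp_pos _).le hX.compl_nonneg hY.compl_nonneg
    ((exp_pos _).le.trans hX.le_diff) (le_fitchD_add_mul_fitchC_node hlam hnX hdX) ?_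
  rw [← exp_neg_two_mul_eq_mul]
  exact hY.le_diff
end
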